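/- arXiv:2302.03108 — 16 statements merged into one kernel-verified Lean document; each statement's English description precedes it below -/
import Mathlib

section
/- Let f : 𝔹ⁿ → 𝔹ⁿ with no loop at v in G(f). Let π : 𝔹ⁿ → 𝔹^{n-1} be the projection forgetting coordinate v, S : 𝔹^{n-1} → 𝔹ⁿ the unique map with S ∘ π = R (where R(x) sets coordinate v to f_v(x)), and define the reduced network f̃ = π ∘ f ∘ S. Then for all x, y ∈ 𝔹ⁿ, if R(x) → y is a transition in AD(f), then π(x) → π(y) is a transition in AD(f̃). -/
open Function Relation

/-- Flip coordinate `i` of a Boolean state. -/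
def flipc {V : Type*} [DecidableEq V] (x : V → Bool) (i : V) : V → Bool :=
  Function.update x i (!(x i))

/-- Transition relation of the asynchronous dynamics `AD f`. -/
def Step {V : Type*} [DecidableEq V] (f : (V → Bool) → V → Bool) (x y : V → Bool) : Prop :=
  ∃ i, f x i ≠ x i ∧ y = flipc x i

/-- Trap set of the asynchronous dynamics. -/
def IsTrap {V : Type*} [DecidableEq V] (f : (V → Bool) → V → Bool) (T : Set (V → Bool)) : Prop :=
  ∀ x ∈ T, ∀ y, Step f x y → y ∈ T

/-- Attractor: minimal nonempty trap set. -/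
def IsAttractor {V : Type*} [DecidableEq V] (f : (V → Bool) → V → Bool) (A : Set (V → Bool)) : Prop :=
  A.Nonempty ∧ IsTrap f A ∧ ∀ B ⊆ A, B.Nonempty → IsTrap f B → B = A

/-- `R(x)`: replace coordinate `v` by `f_v(x)`. -/
def Rv {n : ℕ} (f : (Fin n → Bool) → Fin n → Bool) (v : Fin n) (x : Fin n → Bool) : Fin n → Bool :=
  Function.update x v (f x v)

/-- `R^a(x)`: replace coordinate `v` by `f_v(x^{v=a})`. -/
def Ra {n : ℕ} (f : (Fin n → Bool) → Fin n → Bool) (v : Fin n) (a : Bool) (x : Fin n → Bool) :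
    Fin n → Bool :=
  Function.update x v (f (Function.update x v a) v)

/-- Projection forgetting coordinate `v`. -/
def proj {n : ℕ} (v : Fin n) (x : Fin n → Bool) : {i : Fin n // i ≠ v} → Bool :=
  fun i => x i.1

/-- No loop at `v` in the interaction graph. -/
def NoLoop {n : ℕ} (f : (Fin n → Bool) → Fin n → Bool) (v : Fin n) : Prop :=
  ∀ x, f x v = f (flipc x v) v

/-- No positive loop at `v` in the interaction graph. -/
def NoPosLoop {n : ℕ} (f : (Fin n → Bool) → Fin n → Bool) (v : Fin n) : Prop :=
  ∀ x, f (Function.update x v true) v = true → f (Function.update x v false) v = true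

/-- Boolean value as an integer. -/
def bint (b : Bool) : ℤ := if b then 1 else 0

/-- `G(f)` has an edge `j → i` of sign `s`. -/
def HasEdge {V : Type*} [DecidableEq V] (f : (V → Bool) → V → Bool) (j i : V) (s : ℤ) : Prop :=
  ∃ x, (bint (f (flipc x j) i) - bint (f x i)) * (bint (!(x j)) - bint (x j)) = s

theorem stmt2 (n : ℕ) (f : (Fin n → Bool) → Fin n → Bool) (v : Fin n)
    (hv : NoLoop f v)
    (S : ({i : Fin n // i ≠ v} → Bool) → Fin n → Bool)
    (hS : ∀ x, S (proj v x) = Rv f v x)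
    (ft : ({i : Fin n // i ≠ v} → Bool) → {i : Fin n // i ≠ v} → Bool)
    (hft : ∀ y, ft y = proj v (f (S y)))
    (x y : Fin n → Bool) (h : Step f (Rv f v x) y) :
    Step ft (proj v x) (proj v y) := by
  obtain ⟨i, hne, hy⟩ := h
  -- f (Rv f v x) v = f x v
  have hRfv : f (Rv f v x) v = f x v := by
    by_cases hc : f x v = x v
    · have : Rv f v x = x := by
        unfold Rv; rw [hc, Function.update_eq_self]
      rw [this]
    · have hfx : f x v = !(x v) := by
        cases hb : x v <;> cases hb2 : f x v <;> simp_all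
      have : Rv f v x = flipc x v := by
        unfold Rv flipc; rw [hfx]
      rw [this, ← hv x]
  have hiv : i ≠ v := by
    intro hiv; subst hiv
    apply hne
    rw [hRfv]
    unfold Rv
    simp
  refine ⟨⟨i, hiv⟩, ?_, ?_⟩
  · rw [hft, hS]
    show f (Rv f v x) i ≠ x i
    have : Rv f v x i = x i := Function.update_of_ne hiv _ _
    rwa [this] at hne
  · funext j
    have hjv : j.1 ≠ v := j.2
    show y j.1 = Function.update (proj v x) ⟨i, hiv⟩ (!(proj v x ⟨i, hiv⟩)) j
    rw [hy]
    by_cases hji : j.1 = i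
    · have hj : j = ⟨i, hiv⟩ := Subtype.ext hji
      subst hj
      simp only [flipc, Function.update_self]
      congr 1
      exact Function.update_of_ne hiv _ _
    · rw [Function.update_of_ne (fun h => hji (congrArg Subtype.val h))]
      show flipc (Rv f v x) i j.1 = x j.1
      unfold flipc Rv
      rw [Function.update_of_ne hji, Function.update_of_ne hjv]
end

section
/- Let f : 𝔹ⁿ → 𝔹ⁿ with no loop at v in G(f) and f̃ = π ∘ f ∘ S the reduced network obtained by eliminating v. If x ∈ 𝔹ⁿ is a fixed point of f, then x = R(x), π(x) is a fixed point of f̃, and no other fixed point of f projects to π(x). Conversely, if y ∈ 𝔹^{n-1} is a fixed point of f̃, then S(y) is a fixed point of f. Hence f and f̃ have the same number of fixed points. -/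
open Function Relation

theorem stmt3 (n : ℕ) (f : (Fin n → Bool) → Fin n → Bool) (v : Fin n)
    (hv : NoLoop f v)
    (S : ({i : Fin n // i ≠ v} → Bool) → Fin n → Bool)
    (hS : ∀ x, S (proj v x) = Rv f v x)
    (ft : ({i : Fin n // i ≠ v} → Bool) → {i : Fin n // i ≠ v} → Bool)
    (hft : ∀ y, ft y = proj v (f (S y))) :
    (∀ x, f x = x →
      x = Rv f v x ∧ ft (proj v x) = proj v x ∧
      ∀ x', f x' = x' → proj v x' = proj v x → x' = x) ∧
    (∀ y, ft y = y → f (S y) = S y) ∧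
    Nat.card {x : Fin n → Bool // f x = x} = Nat.card {y : {i : Fin n // i ≠ v} → Bool // ft y = y} := by
  -- f at v ignores the v-coordinate
  have hupd : ∀ x a, f (Function.update x v a) v = f x v := by
    intro x a
    by_cases h : a = x v
    · rw [h, Function.update_eq_self]
    · have ha : a = !(x v) := by cases a <;> cases hx : x v <;> simp_all
      rw [ha]
      exact (hv x).symm
  -- extension of y
  set ext : ({i : Fin n // i ≠ v} → Bool) → Fin n → Bool :=
    fun y i => if h : i = v then false else y ⟨i, h⟩ with hext
  have hprojext : ∀ y, proj v (ext y) = y := by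
    intro y; funext i; simp [proj, hext, i.2]
  have hSy : ∀ y, S y = Rv f v (ext y) := by
    intro y
    conv_lhs => rw [← hprojext y]
    exact hS _
  have hRfix : ∀ x, f x = x → Rv f v x = x := by
    intro x hx
    unfold Rv; rw [congrFun hx v, Function.update_eq_self]
  have hSfix : ∀ x, f x = x → S (proj v x) = x := by
    intro x hx; rw [hS, hRfix x hx]
  have part1 : ∀ x, f x = x →
      x = Rv f v x ∧ ft (proj v x) = proj v x ∧
      ∀ x', f x' = x' → proj v x' = proj v x → x' = x := by
    intro x hx
    refine ⟨(hRfix x hx).symm, ?_, ?_⟩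
    · rw [hft, hSfix x hx, hx]
    · intro x' hx' hp
      rw [← hSfix x' hx', hp, hSfix x hx]
  have part2 : ∀ y, ft y = y → f (S y) = S y := by
    intro y hy
    have hSv : S y v = f (ext y) v := by
      rw [hSy]; simp [Rv]
    funext i
    by_cases h : i = v
    · subst h
      rw [hSv, hSy]
      exact hupd (ext y) _
    · have h1 : f (S y) i = y ⟨i, h⟩ := by
        have := congrFun ((hft y).symm.trans hy) ⟨i, h⟩
        exact this
      have h2 : S y i = y ⟨i, h⟩ := by
        rw [hSy]; simp [Rv, Function.update_of_ne h, hext, h]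
      rw [h1, h2]
  have hprojS : ∀ y, proj v (S y) = y := by
    intro y
    rw [hSy]
    have : proj v (Rv f v (ext y)) = proj v (ext y) := by
      funext i; simp [proj, Rv, Function.update_of_ne i.2]
    rw [this, hprojext]
  refine ⟨part1, part2, ?_⟩
  exact Nat.card_congr
    { toFun := fun x => ⟨proj v x.1, ((part1 x.1 x.2).2.1)⟩
      invFun := fun y => ⟨S y.1, part2 y.1 y.2⟩
      left_inv := fun x => Subtype.ext (hSfix x.1 x.2)
      right_inv := fun y => Subtype.ext (hprojS y.1) }
end

section
/- Let f : 𝔹ⁿ → 𝔹ⁿ with no loop at v in G(f) and f̃ the reduced network obtained by eliminating v. If T ⊆ 𝔹ⁿ is a trap set for AD(f), then π(T) is a trap set for AD(f̃). -/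
open Function Relation

theorem stmt4 (n : ℕ) (f : (Fin n → Bool) → Fin n → Bool) (v : Fin n)
    (hv : NoLoop f v)
    (S : ({i : Fin n // i ≠ v} → Bool) → Fin n → Bool)
    (hS : ∀ x, S (proj v x) = Rv f v x)
    (ft : ({i : Fin n // i ≠ v} → Bool) → {i : Fin n // i ≠ v} → Bool)
    (hft : ∀ y, ft y = proj v (f (S y)))
    (T : Set (Fin n → Bool)) (hT : IsTrap f T) :
    IsTrap ft (proj v '' T) := by
  rintro y ⟨x, hxT, rfl⟩ z ⟨i, hi, rfl⟩
  set x' : Fin n → Bool := Rv f v x with hx'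
  have hxj : ∀ j : Fin n, j ≠ v → x' j = x j := by
    intro j hj; simp [hx', Rv, Function.update_apply, hj]
  have hxv : x' v = f x v := by simp [hx', Rv]
  have hproj : proj v x' = proj v x := funext fun j => hxj j.1 j.2
  have key : x' = x ∨ x' = flipc x v := by
    by_cases h : f x v = x v
    · left; funext j; by_cases hj : j = v
      · subst hj; simp [hx', Rv, h]
      · exact hxj j hj
    · right
      have hnot : f x v = !(x v) := by
        cases hb : x v <;> cases hb' : f x v <;> simp_all
      funext j; by_cases hj : j = v
      · subst hj; simp [hx', Rv, flipc, hnot]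
      · rw [hxj j hj]; simp [flipc, Function.update_apply, hj]
  have hx'T : x' ∈ T := by
    rcases key with h | h
    · rwa [h]
    · refine hT x hxT x' ⟨v, ?_, h⟩
      have : f x v = !(x v) := by rw [← hxv, h]; simp [flipc]
      simp [this]
  have hdep : f x' v = f x v := by
    rcases key with h | h
    · rw [h]
    · rw [h, ← hv x]
  have hftS : ft (proj v x) = proj v (f x') := by rw [hft, hS]
  have hfi : f x' i.1 ≠ x' i.1 := by
    intro h
    apply hi
    rw [hftS]
    show f x' i.1 = x i.1
    rw [h, hxj i.1 i.2]
  have hx''T : flipc x' i.1 ∈ T := hT x' hx'T _ ⟨i.1, hfi, rfl⟩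
  refine ⟨flipc x' i.1, hx''T, ?_⟩
  funext j
  by_cases hj : j = i
  · subst hj
    show flipc x' j.1 j.1 = flipc (proj v x) j j
    simp [flipc, proj, hxj j.1 j.2]
  · have hj1 : j.1 ≠ i.1 := fun h => hj (Subtype.ext h)
    show flipc x' i.1 j.1 = flipc (proj v x) i j
    simp [flipc, Function.update_apply, hj1, hj, proj, hxj j.1 j.2]
end

section
/- Let f : 𝔹ⁿ → 𝔹ⁿ have no positive loop at v. Define the generalized reduced network f̃ : 𝔹^{n-1} → 𝔹^{n-1} by f̃_i(x) = f_i(S^0(x)) ∧ f_i(S^1(x)) if x_i = 1, and f̃_i(x) = f_i(S^0(x)) ∨ f_i(S^1(x)) if x_i = 0, where S^a is the section with S^a∘π = R^a. Then for all x ∈ 𝔹ⁿ, a ∈ {0,1}, and i ≠ v: if R^a(x) → (R^a(x))̄^i is a transition in AD(f), then π(x) → π(x̄^i) is a transition in AD(f̃). -/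
open Function Relation

theorem stmt7 (n : ℕ) (f : (Fin n → Bool) → Fin n → Bool) (v : Fin n)
    (hv : NoPosLoop f v)
    (S0 S1 : ({i : Fin n // i ≠ v} → Bool) → Fin n → Bool)
    (hS0 : ∀ x, S0 (proj v x) = Ra f v false x)
    (hS1 : ∀ x, S1 (proj v x) = Ra f v true x)
    (ft : ({i : Fin n // i ≠ v} → Bool) → {i : Fin n // i ≠ v} → Bool)
    (hft : ∀ y i, ft y i = if y i then f (S0 y) i.1 && f (S1 y) i.1 else f (S0 y) i.1 || f (S1 y) i.1)
    (x : Fin n → Bool) (a : Bool) (i : Fin n) (hi : i ≠ v)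
    (h : f (Ra f v a x) i ≠ Ra f v a x i) :
    Step ft (proj v x) (proj v (flipc x i)) := by
  refine ⟨⟨i, hi⟩, ?_, ?_⟩
  · have hxi : Ra f v a x i = x i := Function.update_of_ne hi _ _
    rw [hxi] at h
    rw [hft, hS0, hS1]
    show (if proj v x ⟨i, hi⟩ then _ else _) ≠ _
    have hpx : proj v x ⟨i, hi⟩ = x i := rfl
    rw [hpx]
    cases a <;> cases hxv : x i <;> simp [hxv] at h ⊢ <;> simp [h]
  · funext j
    show flipc x i j.1 = Function.update (proj v x) ⟨i, hi⟩ (!(proj v x ⟨i, hi⟩)) j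
    by_cases hj : j = ⟨i, hi⟩
    · subst hj; simp [flipc, proj]
    · have hj1 : j.1 ≠ i := fun hc => hj (Subtype.ext hc)
      rw [Function.update_of_ne hj, flipc, Function.update_of_ne hj1]
      rfl
end

section
/- Let f : 𝔹ⁿ → 𝔹ⁿ have no positive loop at v and let f̃ be the generalized reduced network. If x → x̄^i is a transition in AD(f̃) (i ≠ v), then there exists a ∈ {0,1} such that S^a(x) → (S^a(x))̄^i is a transition in AD(f); moreover, from each y ∈ π^{-1}(x) there is a path in AD(f) to (S^a(x))̄^i. -/
open Function Relation

lemma reach_aux {n : ℕ} (f : (Fin n → Bool) → Fin n → Bool) (v : Fin n)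
    (hv : NoPosLoop f v) (y : Fin n → Bool) (b : Bool) :
    Relation.ReflTransGen (Step f) y (Ra f v b y) := by
  have hpos : f (Function.update y v true) v = true →
      f (Function.update y v false) v = true := hv y
  set c := f (Function.update y v b) v with hc
  by_cases hcy : c = y v
  · have : Ra f v b y = y := by
      unfold Ra
      rw [← hc, hcy, Function.update_eq_self]
    rw [this]
  · refine Relation.ReflTransGen.single ⟨v, ?_, ?_⟩
    · -- f y v ≠ y v
      cases hyv : y v with
      | true =>
        have hfy : f y v = f (Function.update y v true) v := by
          rw [← hyv, Function.update_eq_self]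
        have hcf : c = false := by
          cases hcc : c
          · rfl
          · exact absurd (by rw [hcc, hyv]) hcy
        cases b with
        | true =>
          rw [hfy, ← hc, hcf]; simp
        | false =>
          have hb1 : f (Function.update y v true) v = false := by
            cases hb1 : f (Function.update y v true) v
            · rfl
            · have := hpos hb1
              rw [← hc, hcf] at this
              exact absurd this (by simp)
          rw [hfy, hb1]; simp
      | false =>
        have hfy : f y v = f (Function.update y v false) v := by
          rw [← hyv, Function.update_eq_self]
        have hcf : c = true := by
          cases hcc : c
          · exact absurd (by rw [hcc, hyv]) hcy
          · rfl
        cases b with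
        | false =>
          rw [hfy, ← hc, hcf]; simp
        | true =>
          have hb0 : f (Function.update y v false) v = true := by
            apply hpos
            rw [← hc, hcf]
          rw [hfy, hb0]; simp
    · -- Ra f v b y = flipc y v
      unfold Ra flipc
      rw [← hc]
      cases hyv : y v <;> cases hcc : c <;> simp_all

theorem stmt8 (n : ℕ) (f : (Fin n → Bool) → Fin n → Bool) (v : Fin n)
    (hv : NoPosLoop f v)
    (S0 S1 : ({i : Fin n // i ≠ v} → Bool) → Fin n → Bool)
    (hS0 : ∀ x, S0 (proj v x) = Ra f v false x)
    (hS1 : ∀ x, S1 (proj v x) = Ra f v true x)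
    (ft : ({i : Fin n // i ≠ v} → Bool) → {i : Fin n // i ≠ v} → Bool)
    (hft : ∀ y i, ft y i = if y i then f (S0 y) i.1 && f (S1 y) i.1 else f (S0 y) i.1 || f (S1 y) i.1)
    (x : {i : Fin n // i ≠ v} → Bool) (i : {i : Fin n // i ≠ v})
    (h : ft x i ≠ x i) :
    ∃ a : Bool,
      (f ((if a then S1 else S0) x) i.1 ≠ (if a then S1 else S0) x i.1) ∧
      ∀ y : Fin n → Bool, proj v y = x →
        Relation.ReflTransGen (Step f) y (flipc ((if a then S1 else S0) x) i.1) := by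
  classical
  set y0 : Fin n → Bool := fun j => if hj : j = v then false else x ⟨j, hj⟩ with hy0
  have hproj0 : proj v y0 = x := by
    funext j
    simp [proj, hy0, j.2]
  have hSa_val : ∀ (a : Bool) (z : Fin n → Bool), proj v z = x →
      (if a then S1 else S0) x = Ra f v a z := by
    intro a z hz
    cases a
    · rw [if_neg (by simp), ← hz, hS0]
    · rw [if_pos rfl, ← hz, hS1]
  have hSx : ∀ a : Bool, (if a then S1 else S0) x i.1 = x i := by
    intro a
    rw [hSa_val a y0 hproj0]
    unfold Ra
    rw [Function.update_of_ne i.2]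
    simp [hy0, i.2]
  have hex : ∃ a : Bool, f ((if a then S1 else S0) x) i.1 ≠ x i := by
    rw [hft] at h
    by_cases h0 : f (S0 x) i.1 = x i
    · refine ⟨true, ?_⟩
      rw [if_pos rfl]
      intro h1
      apply h
      rw [h0, h1]
      cases x i <;> simp
    · exact ⟨false, by simpa using h0⟩
  obtain ⟨a, ha⟩ := hex
  refine ⟨a, by rw [hSx a]; exact ha, ?_⟩
  intro y hy
  have h1 : Relation.ReflTransGen (Step f) y ((if a then S1 else S0) x) := by
    rw [hSa_val a y hy]
    exact reach_aux f v hv y a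
  refine h1.tail ⟨i.1, ?_, rfl⟩
  rw [hSx a]
  exact ha
end

section
/- Let f : 𝔹ⁿ → 𝔹ⁿ have no positive loop at v and let f̃ be the generalized reduced network. If x ∈ 𝔹ⁿ is a fixed point of f, then x = R^0(x) = R^1(x), π(x) is a fixed point of f̃, and no other fixed point of f projects to π(x). -/
open Function Relation

theorem stmt9 (n : ℕ) (f : (Fin n → Bool) → Fin n → Bool) (v : Fin n)
    (hv : NoPosLoop f v)
    (S0 S1 : ({i : Fin n // i ≠ v} → Bool) → Fin n → Bool)
    (hS0 : ∀ x, S0 (proj v x) = Ra f v false x)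
    (hS1 : ∀ x, S1 (proj v x) = Ra f v true x)
    (ft : ({i : Fin n // i ≠ v} → Bool) → {i : Fin n // i ≠ v} → Bool)
    (hft : ∀ y i, ft y i = if y i then f (S0 y) i.1 && f (S1 y) i.1 else f (S0 y) i.1 || f (S1 y) i.1)
    (x : Fin n → Bool) (hx : f x = x) :
    x = Ra f v false x ∧ x = Ra f v true x ∧ ft (proj v x) = proj v x ∧
    ∀ x', f x' = x' → proj v x' = proj v x → x' = x := by
  have hfx : ∀ i, f x i = x i := fun i => congrFun hx i
  have key : ∀ a, f (Function.update x v a) v = x v := by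
    intro a
    rcases Bool.eq_false_or_eq_true (x v) with hxv | hxv
    · -- x v = true
      have h1 : Function.update x v true = x := by
        rw [← hxv]; exact Function.update_eq_self v x
      cases a
      · have ht : f (Function.update x v true) v = true := by
          rw [h1, hfx v, hxv]
        rw [hv x ht, hxv]
      · rw [h1, hfx v]
    · -- x v = false
      have h0 : Function.update x v false = x := by
        rw [← hxv]; exact Function.update_eq_self v x
      cases a
      · rw [h0]; exact hfx v
      · by_contra h
        have ht : f (Function.update x v true) v = true := by
          cases hb : f (Function.update x v true) v
          · rw [hxv] at h; exact absurd hb h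
          · rfl
        have hfalse := hv x ht
        rw [h0, hfx v, hxv] at hfalse
        simp at hfalse
  have hR : ∀ a, Ra f v a x = x := by
    intro a
    unfold Ra
    rw [key a]
    exact Function.update_eq_self v x
  have hS0x : S0 (proj v x) = x := by rw [hS0]; exact hR false
  have hS1x : S1 (proj v x) = x := by rw [hS1]; exact hR true
  refine ⟨(hR false).symm, (hR true).symm, ?_, ?_⟩
  · funext i
    rw [hft, hS0x, hS1x, hfx i.1]
    show (if x i.1 then x i.1 && x i.1 else x i.1 || x i.1) = x i.1
    cases x i.1 <;> simp
  · intro x' hx' hproj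
    have hfx' : ∀ i, f x' i = x' i := congrFun hx'
    have hoff : ∀ i, i ≠ v → x' i = x i := fun i hi => congrFun hproj ⟨i, hi⟩
    suffices hvv : x' v = x v by
      funext i
      by_cases hi : i = v
      · subst hi; exact hvv
      · exact hoff i hi
    by_contra hne
    rcases Bool.eq_false_or_eq_true (x v) with hxv | hxv
    · -- x v = true, so x' v = false
      have hx'v : x' v = false := by
        cases h : x' v
        · rfl
        · rw [hxv] at hne; exact absurd h hne
      have hxeq : Function.update x v false = x' := by
        funext i
        by_cases hi : i = v
        · subst hi; simp [Function.update, hx'v]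
        · simp only [Function.update]; rw [dif_neg hi]; exact (hoff i hi).symm
      have hx1eq : Function.update x v true = x := by
        rw [← hxv]; exact Function.update_eq_self v x
      have ht : f (Function.update x v true) v = true := by
        rw [hx1eq, hfx v, hxv]
      have := hv x ht
      rw [hxeq, hfx' v, hx'v] at this
      simp at this
    · -- x v = false, so x' v = true
      have hx'v : x' v = true := by
        cases h : x' v
        · rw [hxv] at hne; exact absurd h hne
        · rfl
      have hxeq : Function.update x' v false = x := by
        funext i
        by_cases hi : i = v
        · subst hi; simp [Function.update, hxv]
        · simp only [Function.update]; rw [dif_neg hi]; exact hoff i hi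
      have hx'eq : Function.update x' v true = x' := by
        rw [← hx'v]; exact Function.update_eq_self v x'
      have ht : f (Function.update x' v true) v = true := by
        rw [hx'eq, hfx' v, hx'v]
      have := hv x' ht
      rw [hxeq, hfx v, hxv] at this
      simp at this
end

section
/- Let f : 𝔹ⁿ → 𝔹ⁿ have no positive loop at v and let f̃ be the generalized reduced network. If x ∈ 𝔹^{n-1} is a fixed point of f̃, then the set {S^0(x), S^1(x)} is an attractor of AD(f) (a fixed point if S^0(x)=S^1(x), otherwise a two-state cyclic attractor). -/
open Function Relation

/-- A fixed point gives a singleton attractor. -/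
lemma attr_fixed {V : Type*} [DecidableEq V] (f : (V → Bool) → V → Bool) (p : V → Bool)
    (hp : ∀ i, f p i = p i) : IsAttractor f {p, p} := by
  have hpp : ({p, p} : Set (V → Bool)) = {p} := by simp
  rw [hpp]
  refine ⟨⟨p, rfl⟩, ?_, ?_⟩
  · intro z hz y hy
    rcases hy with ⟨i, hi, _⟩
    rw [Set.mem_singleton_iff] at hz
    subst hz
    exact absurd (hp i) hi
  · intro B hB ⟨z, hz⟩ _
    have := hB hz
    rw [Set.mem_singleton_iff] at this
    subst this
    apply Set.Subset.antisymm hB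
    intro w hw
    rw [Set.mem_singleton_iff] at hw
    subst hw; exact hz

theorem stmt10 (n : ℕ) (f : (Fin n → Bool) → Fin n → Bool) (v : Fin n)
    (hv : NoPosLoop f v)
    (S0 S1 : ({i : Fin n // i ≠ v} → Bool) → Fin n → Bool)
    (hS0 : ∀ x, S0 (proj v x) = Ra f v false x)
    (hS1 : ∀ x, S1 (proj v x) = Ra f v true x)
    (ft : ({i : Fin n // i ≠ v} → Bool) → {i : Fin n // i ≠ v} → Bool)
    (hft : ∀ y i, ft y i = if y i then f (S0 y) i.1 && f (S1 y) i.1 else f (S0 y) i.1 || f (S1 y) i.1)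
    (x : {i : Fin n // i ≠ v} → Bool) (hx : ft x = x) :
    IsAttractor f {S0 x, S1 x} := by
  classical
  set e : Bool → Fin n → Bool := fun b i => if h : i = v then b else x ⟨i, h⟩ with he
  have hev : ∀ b, e b v = b := by intro b; simp [he]
  have hei : ∀ b (i : Fin n) (h : i ≠ v), e b i = x ⟨i, h⟩ := by
    intro b i h; simp [he, h]
  have hproj : ∀ b, proj v (e b) = x := by
    intro b; funext i; simp [proj, he, i.2]
  have hupd : ∀ b c, Function.update (e b) v c = e c := by
    intro b c; funext i
    by_cases h : i = v
    · subst h; simp [hev]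
    · rw [Function.update_of_ne h, hei b i h, hei c i h]
  obtain ⟨a, ha⟩ : ∃ a, a = f (e false) v := ⟨_, rfl⟩
  obtain ⟨b, hb⟩ : ∃ b, b = f (e true) v := ⟨_, rfl⟩
  have hS0' : S0 x = e a := by
    have h := hS0 (e false); rw [hproj] at h
    rw [h, Ra, hupd false false, ← ha, hupd]
  have hS1' : S1 x = e b := by
    have h := hS1 (e true); rw [hproj] at h
    rw [h, Ra, hupd true true, ← hb, hupd]
  have hab : b = true → a = true := by
    intro h
    rw [ha]
    have h2 := hv (e false)
    rw [hupd, hupd] at h2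
    exact h2 (hb.symm.trans h)
  have key : ∀ i : {i : Fin n // i ≠ v}, f (e a) i.1 = x i ∧ f (e b) i.1 = x i := by
    intro i
    have h := congrFun hx i
    rw [hft, hS0', hS1'] at h
    cases hxi : x i <;> rw [hxi] at h <;> simp at h <;> simp [h]
  have fixa : ∀ (i : Fin n) (h : i ≠ v), f (e a) i = e a i := by
    intro i h; rw [hei a i h]; exact (key ⟨i, h⟩).1
  have fixb : ∀ (i : Fin n) (h : i ≠ v), f (e b) i = e b i := by
    intro i h; rw [hei b i h]; exact (key ⟨i, h⟩).2
  rw [hS0', hS1']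
  by_cases hcab : a = b
  · -- fixed point case
    have hfv : f (e a) v = a := by
      rcases Bool.eq_false_or_eq_true a with hca | hca
      · rw [hca]; exact hb.symm.trans (hcab.symm.trans hca)
      · rw [hca]; exact ha.symm.trans hca
    have hfix : ∀ i, f (e a) i = e a i := by
      intro i
      by_cases h : i = v
      · subst h; rw [hfv, hev]
      · exact fixa i h
    rw [show e b = e a by rw [hcab]]
    exact attr_fixed f (e a) hfix
  · -- two-cycle case: must have a = true, b = false
    have hca : a = true := by
      rcases Bool.eq_false_or_eq_true a with h1 | h1
      · exact h1
      · rcases Bool.eq_false_or_eq_true b with h2 | h2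
        · have h3 := hab h2; rw [h1] at h3; exact Bool.noConfusion h3
        · exact absurd (h1.trans h2.symm) hcab
    have hcb : b = false := by
      rcases Bool.eq_false_or_eq_true b with h2 | h2
      · exact absurd (hca.trans h2.symm) hcab
      · exact h2
    have hne : e a ≠ e b := by
      intro h
      have h2 := congrFun h v
      rw [hev, hev, hca, hcb] at h2
      exact Bool.noConfusion h2
    have hfav : f (e a) v = false := by
      rw [hca, ← hb, hcb]
    have hfbv : f (e b) v = true := by
      rw [hcb, ← ha, hca]
    have hflipa : flipc (e a) v = e b := by
      rw [flipc, hev, hca, hcb]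
      simpa using hupd true false
    have hflipb : flipc (e b) v = e a := by
      rw [flipc, hev, hca, hcb]
      simpa using hupd false true
    have stepab : Step f (e a) (e b) := by
      refine ⟨v, ?_, hflipa.symm⟩
      rw [hfav, hev, hca]; simp
    have stepba : Step f (e b) (e a) := by
      refine ⟨v, ?_, hflipb.symm⟩
      rw [hfbv, hev, hcb]; simp
    refine ⟨⟨e a, Or.inl rfl⟩, ?_, ?_⟩
    · rintro z hz y ⟨i, hi, hy⟩
      rcases hz with hz | hz
      · subst hz
        have hiv : i = v := by
          by_contra h
          exact hi (fixa i h)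
        subst hiv; subst hy
        rw [hflipa]
        exact Or.inr rfl
      · rw [Set.mem_singleton_iff] at hz
        subst hz
        have hiv : i = v := by
          by_contra h
          exact hi (fixb i h)
        subst hiv; subst hy
        rw [hflipb]
        exact Or.inl rfl
    · rintro B hB ⟨z, hz⟩ hBtrap
      have hboth : e a ∈ B ∧ e b ∈ B := by
        rcases hB hz with h | h
        · rw [h] at hz
          exact ⟨hz, hBtrap _ hz _ stepab⟩
        · rw [Set.mem_singleton_iff] at h
          rw [h] at hz
          exact ⟨hBtrap _ hz _ stepba, hz⟩
      apply Set.Subset.antisymm hB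
      rintro w (hw | hw)
      · subst hw; exact hboth.1
      · rw [Set.mem_singleton_iff] at hw; subst hw; exact hboth.2
end

section
/- Let f : 𝔹ⁿ → 𝔹ⁿ have no positive loop at v and let f̃ be the generalized reduced network. If {x, x̄^v} is a cyclic attractor of AD(f), then π(x) is a fixed point of f̃. -/
open Function Relation

theorem stmt11 (n : ℕ) (f : (Fin n → Bool) → Fin n → Bool) (v : Fin n)
    (hv : NoPosLoop f v)
    (S0 S1 : ({i : Fin n // i ≠ v} → Bool) → Fin n → Bool)
    (hS0 : ∀ x, S0 (proj v x) = Ra f v false x)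
    (hS1 : ∀ x, S1 (proj v x) = Ra f v true x)
    (ft : ({i : Fin n // i ≠ v} → Bool) → {i : Fin n // i ≠ v} → Bool)
    (hft : ∀ y i, ft y i = if y i then f (S0 y) i.1 && f (S1 y) i.1 else f (S0 y) i.1 || f (S1 y) i.1)
    (x : Fin n → Bool) (hA : IsAttractor f {x, flipc x v}) :
    ft (proj v x) = proj v x := by
  obtain ⟨hne, htrap, hmin⟩ := hA
  set y := flipc x v with hy
  have hyv : y v = !(x v) := by simp [hy, flipc]
  have hyx : ∀ i, i ≠ v → y i = x i := by
    intro i hi; simp [hy, flipc, Function.update_of_ne hi]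
  have hxy : y ≠ x := by
    intro h; have h2 := congrFun h v; rw [hyv] at h2; simp at h2
  -- coordinates other than v are stable on the attractor
  have key : ∀ z ∈ ({x, y} : Set _), ∀ i, i ≠ v → f z i = z i := by
    intro z hz i hi
    by_contra h
    have hmem := htrap z hz _ ⟨i, h, rfl⟩
    have hfz : flipc z i i = !(z i) := by simp [flipc]
    have hzi : ∀ w, w ∈ ({x, y} : Set _) → w i = x i := by
      intro w hw
      simp only [Set.mem_insert_iff, Set.mem_singleton_iff] at hw
      rcases hw with hw | hw
      · rw [hw]
      · rw [hw]; exact hyx i hi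
    have h1 : flipc z i i = x i := hzi _ hmem
    have h2 : z i = x i := hzi _ hz
    rw [hfz, h2] at h1
    simp at h1
  -- both states are not fixed points
  have notfix : ∀ z ∈ ({x, y} : Set _), f z v ≠ z v := by
    intro z hz h
    have htz : IsTrap f {z} := by
      intro w hw u hu
      rcases hu with ⟨i, hi, rfl⟩
      simp only [Set.mem_singleton_iff] at hw; subst hw
      by_cases hiv : i = v
      · subst hiv; exact (hi h).elim
      · exact (hi (key w hz i hiv)).elim
    have heq : ({z} : Set _) = {x, y} :=
      hmin {z} (by simpa using hz) ⟨z, rfl⟩ htz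
    have hx' : x ∈ ({z} : Set _) := heq ▸ (by simp : x ∈ ({x, y} : Set _))
    have hy' : y ∈ ({z} : Set _) := heq ▸ (by simp : y ∈ ({x, y} : Set _))
    simp only [Set.mem_singleton_iff] at hx' hy'
    exact hxy (hy'.trans hx'.symm)
  have hfxv : f x v ≠ x v := notfix x (by simp)
  have hfyv : f y v ≠ y v := notfix y (by simp)
  have hupdy : x v = true → Function.update x v false = y := by
    intro hxv; funext j; by_cases hj : j = v
    · subst hj; simp [hyv, hxv]
    · simp [Function.update_of_ne hj, hyx j hj]
  have hupdy' : x v = false → Function.update x v true = y := by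
    intro hxv; funext j; by_cases hj : j = v
    · subst hj; simp [hyv, hxv]
    · simp [Function.update_of_ne hj, hyx j hj]
  -- compute f at the two updated states
  have hu0 : f (Function.update x v false) v = true := by
    cases hxv : x v
    · have hx0 : Function.update x v false = x := by
        rw [← hxv]; exact Function.update_eq_self v x
      rw [hx0]; rw [hxv] at hfxv; simpa using hfxv
    · rw [hupdy hxv]; rw [hyv, hxv] at hfyv; simpa using hfyv
  have hu1 : f (Function.update x v true) v = false := by
    cases hxv : x v
    · rw [hupdy' hxv]; rw [hyv, hxv] at hfyv; simpa using hfyv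
    · have hx1 : Function.update x v true = x := by
        rw [← hxv]; exact Function.update_eq_self v x
      rw [hx1]; rw [hxv] at hfxv; simpa using hfxv
  have hS0x : S0 (proj v x) = Function.update x v true := by
    rw [hS0]; unfold Ra; rw [hu0]
  have hS1x : S1 (proj v x) = Function.update x v false := by
    rw [hS1]; unfold Ra; rw [hu1]
  have hmemu : ∀ b, Function.update x v b ∈ ({x, y} : Set _) := by
    intro b
    cases hxv : x v <;> cases b
    · left; rw [← hxv]; exact Function.update_eq_self v x
    · right; exact (hupdy' hxv).symm ▸ Set.mem_singleton _
    · right; exact (hupdy hxv).symm ▸ Set.mem_singleton _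
    · left; rw [← hxv]; exact Function.update_eq_self v x
  funext i
  rw [hft, hS0x, hS1x]
  have e1 : f (Function.update x v true) i.1 = x i.1 := by
    have h := key _ (hmemu true) i.1 i.2
    rw [h, Function.update_of_ne i.2]
  have e0 : f (Function.update x v false) i.1 = x i.1 := by
    have h := key _ (hmemu false) i.1 i.2
    rw [h, Function.update_of_ne i.2]
  rw [e0, e1]
  show (if x i.1 = true then _ else _) = x i.1
  cases x i.1 <;> simp
end

section
/- Let f : 𝔹ⁿ → 𝔹ⁿ have no positive loop at v and let f̃ be the generalized reduced network. If T ⊆ 𝔹ⁿ is a trap set for AD(f), then π(T) is a trap set for AD(f̃). -/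
open Function Relation

theorem stmt12 (n : ℕ) (f : (Fin n → Bool) → Fin n → Bool) (v : Fin n)
    (hv : NoPosLoop f v)
    (S0 S1 : ({i : Fin n // i ≠ v} → Bool) → Fin n → Bool)
    (hS0 : ∀ x, S0 (proj v x) = Ra f v false x)
    (hS1 : ∀ x, S1 (proj v x) = Ra f v true x)
    (ft : ({i : Fin n // i ≠ v} → Bool) → {i : Fin n // i ≠ v} → Bool)
    (hft : ∀ y i, ft y i = if y i then f (S0 y) i.1 && f (S1 y) i.1 else f (S0 y) i.1 || f (S1 y) i.1)
    (T : Set (Fin n → Bool)) (hT : IsTrap f T) :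
    IsTrap ft (proj v '' T) := by
  rintro y ⟨x, hxT, rfl⟩ z ⟨i, hne, rfl⟩
  have hS0' : S0 (proj v x) = Function.update x v (f (Function.update x v false) v) := by
    rw [hS0]; rfl
  have hS1' : S1 (proj v x) = Function.update x v (f (Function.update x v true) v) := by
    rw [hS1]; rfl
  have key : ∃ a : Bool,
      f (Function.update x v (f (Function.update x v a) v)) i.1 ≠ x i.1 := by
    rw [hft, hS0', hS1'] at hne
    have hy : proj v x i = x i.1 := rfl
    rw [hy] at hne
    set p := f (Function.update x v (f (Function.update x v false) v)) i.1 with hp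
    set q := f (Function.update x v (f (Function.update x v true) v)) i.1 with hq
    by_cases h0 : p = x i.1
    · refine ⟨true, ?_⟩
      rw [← hq]
      cases hx : x i.1 <;> rw [hx] at hne h0 <;> rw [h0] at hne <;> simpa using hne
    · exact ⟨false, h0⟩
  obtain ⟨a, ha⟩ := key
  set w : Fin n → Bool := Function.update x v (f (Function.update x v a) v) with hwdef
  have hw : w ∈ T := by
    by_cases hba : f (Function.update x v a) v = x v
    · rw [hwdef, hba, Function.update_eq_self]; exact hxT
    · by_cases hav : a = x v
      · have hxa : Function.update x v a = x := by rw [hav, Function.update_eq_self]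
        have hfx : f x v ≠ x v := by rw [hxa] at hba; exact hba
        have := hT x hxT _ ⟨v, hfx, rfl⟩
        have hwe : w = flipc x v := by
          rw [hwdef, hxa, flipc]

          cases hfv : f x v <;> cases hxv : x v <;> simp_all
        rwa [hwe]
      · -- a = !(x v), and f (update x v a) v = a
        have haa : f (Function.update x v a) v = a := by
          cases a <;> cases hxv : x v <;> simp_all
        have hfx : f x v ≠ x v := by
          cases hxv : x v
          · -- x v = false, a = true
            have ha' : a = true := by cases a <;> simp_all
            have := hv x
            rw [ha'] at haa
            have h2 := this haa
            have hxe : Function.update x v false = x := by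
              rw [← hxv, Function.update_eq_self]
            rw [hxe] at h2
            simp [h2, hxv]
          · have ha' : a = false := by cases a <;> simp_all
            have hxe : Function.update x v true = x := by
              rw [← hxv, Function.update_eq_self]
            rw [ha'] at haa
            have h2 : f x v = false := by
              by_contra hc
              have : f x v = true := by cases hfv : f x v <;> simp_all
              rw [← hxe] at this
              have := hv x this
              simp_all
            simp [h2, hxv]
        have hstep := hT x hxT _ ⟨v, hfx, rfl⟩
        have hwe : w = flipc x v := by
          rw [hwdef, haa, flipc]

          cases hxv : x v <;> cases a <;> simp_all
        rwa [hwe]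
  have hwi : w i.1 = x i.1 := Function.update_of_ne i.2 _ _
  have step : Step f w (flipc w i.1) := ⟨i.1, by rw [hwi]; exact ha, rfl⟩
  refine ⟨flipc w i.1, hT w hw _ step, ?_⟩
  funext j
  by_cases hj : j = i
  · subst hj
    show flipc w j.1 j.1 = flipc (proj v x) j j
    simp [flipc, hwi, proj]
  · have hj1 : j.1 ≠ i.1 := fun h => hj (Subtype.ext h)
    show flipc w i.1 j.1 = flipc (proj v x) i j
    simp [flipc, Function.update_of_ne hj1, Function.update_of_ne hj,
      hwdef, Function.update_of_ne j.2, proj]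
end

section
/- Let f : 𝔹ⁿ → 𝔹ⁿ have no positive loop at v and let f̃ be the generalized reduced network. If {x, x̄^i} is a cyclic attractor of AD(f) for some i ≠ v, then {π(x), π(x̄^i)} is a cyclic attractor of AD(f̃). -/
open Function Relation

theorem stmt13 (n : ℕ) (f : (Fin n → Bool) → Fin n → Bool) (v : Fin n)
    (hv : NoPosLoop f v)
    (S0 S1 : ({i : Fin n // i ≠ v} → Bool) → Fin n → Bool)
    (hS0 : ∀ x, S0 (proj v x) = Ra f v false x)
    (hS1 : ∀ x, S1 (proj v x) = Ra f v true x)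
    (ft : ({i : Fin n // i ≠ v} → Bool) → {i : Fin n // i ≠ v} → Bool)
    (hft : ∀ y i, ft y i = if y i then f (S0 y) i.1 && f (S1 y) i.1 else f (S0 y) i.1 || f (S1 y) i.1)
    (x : Fin n → Bool) (i : Fin n) (hi : i ≠ v)
    (hA : IsAttractor f {x, flipc x i}) :
    IsAttractor ft {proj v x, proj v (flipc x i)} ∧ proj v x ≠ proj v (flipc x i) := by
  obtain ⟨-, htrap, hmin⟩ := hA
  set x' := flipc x i with hx'def
  have hx'i : x' i = !(x i) := Function.update_self ..
  have hx'j : ∀ j, j ≠ i → x' j = x j := fun j hj => Function.update_of_ne hj _ _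
  -- f fixes all coordinates ≠ i on x and x'
  have hfx : ∀ j, j ≠ i → f x j = x j := by
    intro j hj
    by_contra hne
    have hmem : flipc x j ∈ ({x, x'} : Set _) := htrap x (Or.inl rfl) _ ⟨j, hne, rfl⟩
    have hfl : flipc x j j = !(x j) := Function.update_self ..
    rcases hmem with h | h
    · have := congrFun h j; rw [hfl] at this
      exact Bool.not_ne_self (x j) this
    · have := congrFun h j; rw [hfl, hx'j j hj] at this
      exact Bool.not_ne_self (x j) this
  have hfx' : ∀ j, j ≠ i → f x' j = x' j := by
    intro j hj
    by_contra hne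
    have hmem : flipc x' j ∈ ({x, x'} : Set _) := htrap x' (Or.inr rfl) _ ⟨j, hne, rfl⟩
    have hfl : flipc x' j j = !(x' j) := Function.update_self ..
    rcases hmem with h | h
    · have := congrFun h j; rw [hfl, hx'j j hj] at this
      exact Bool.not_ne_self (x j) this
    · have := congrFun h j; rw [hfl] at this
      exact Bool.not_ne_self (x' j) this
  have hxx' : x ≠ x' := by
    intro h
    have := congrFun h i; rw [hx'i] at this
    exact Bool.not_ne_self (x i) this.symm
  -- f oscillates at i on both states
  have hfxi : f x i = !(x i) := by
    by_contra hne
    have heq : f x i = x i := by cases h1 : f x i <;> cases h2 : x i <;> simp_all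
    have hfix : f x = x := by
      funext j; by_cases hj : j = i
      · subst hj; exact heq
      · exact hfx j hj
    have htr : IsTrap f {x} := by
      rintro z rfl w ⟨k, hk, -⟩
      rw [congrFun hfix k] at hk; exact absurd rfl hk
    have := hmin {x} (by intro z hz; exact Or.inl hz) ⟨x, rfl⟩ htr
    exact hxx' (by have : x' ∈ ({x} : Set _) := this ▸ Or.inr rfl; exact this.symm)
  have hfx'i : f x' i = !(x' i) := by
    by_contra hne
    have heq : f x' i = x' i := by cases h1 : f x' i <;> cases h2 : x' i <;> simp_all
    have hfix : f x' = x' := by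
      funext j; by_cases hj : j = i
      · subst hj; exact heq
      · exact hfx' j hj
    have htr : IsTrap f {x'} := by
      rintro z rfl w ⟨k, hk, -⟩
      rw [congrFun hfix k] at hk; exact absurd rfl hk
    have := hmin {x'} (by intro z hz; exact Or.inr hz) ⟨x', rfl⟩ htr
    exact hxx' (by have : x ∈ ({x'} : Set _) := this ▸ Or.inl rfl; exact this)
  have hvi : v ≠ i := Ne.symm hi
  -- v-steadiness plus NoPosLoop collapses Ra
  have Ra_eq : ∀ (z : Fin n → Bool) (a : Bool), f z v = z v → Ra f v a z = z := by
    intro z a hz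
    have h1 : f (Function.update z v a) v = z v := by
      by_cases ha : a = z v
      · rw [ha, Function.update_eq_self]; exact hz
      · cases hzv : z v
        · have ha' : a = true := by cases a <;> simp_all
          subst ha'
          by_contra hne
          have htrue : f (Function.update z v true) v = true := by
            cases h : f (Function.update z v true) v <;> simp_all
          have := hv z htrue
          rw [show Function.update z v false = z from by
            rw [← hzv, Function.update_eq_self]] at this
          rw [hz, hzv] at this; exact Bool.false_ne_true this
        · have ha' : a = false := by cases a <;> simp_all
          subst ha'
          have htrue : f (Function.update z v true) v = true := by
            rw [show Function.update z v true = z from by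
              rw [← hzv, Function.update_eq_self], hz, hzv]
          exact (hv z htrue).trans rfl
    rw [Ra, h1, Function.update_eq_self]
  have hfxv : f x v = x v := hfx v hvi
  have hfx'v : f x' v = x' v := hfx' v hvi
  have hS0x : S0 (proj v x) = x := by rw [hS0]; exact Ra_eq x false hfxv
  have hS1x : S1 (proj v x) = x := by rw [hS1]; exact Ra_eq x true hfxv
  have hS0x' : S0 (proj v x') = x' := by rw [hS0]; exact Ra_eq x' false hfx'v
  have hS1x' : S1 (proj v x') = x' := by rw [hS1]; exact Ra_eq x' true hfx'v
  have hfty : ∀ k, ft (proj v x) k = f x k.1 := by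
    intro k; rw [hft, hS0x, hS1x]
    cases proj v x k <;> simp
  have hfty' : ∀ k, ft (proj v x') k = f x' k.1 := by
    intro k; rw [hft, hS0x', hS1x']
    cases proj v x' k <;> simp
  set y := proj v x with hy
  set y' := proj v x' with hy'
  have ii : {j : Fin n // j ≠ v} := ⟨i, hi⟩
  have hyk : ∀ k : {j : Fin n // j ≠ v}, y k = x k.1 := fun _ => rfl
  have hy'k : ∀ k : {j : Fin n // j ≠ v}, y' k = x' k.1 := fun _ => rfl
  have hyy' : y ≠ y' := by
    intro h
    have := congrFun h ⟨i, hi⟩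
    rw [hyk, hy'k, hx'i] at this
    exact Bool.not_ne_self (x i) this.symm
  have hflip : flipc y ⟨i, hi⟩ = y' := by
    funext k
    by_cases hk : k = ⟨i, hi⟩
    · subst hk
      rw [show flipc y ⟨i, hi⟩ ⟨i, hi⟩ = !(y ⟨i, hi⟩) from Function.update_self ..]
      rw [hyk, hy'k, hx'i]
    · rw [show flipc y ⟨i, hi⟩ k = y k from Function.update_of_ne hk _ _, hyk, hy'k,
        hx'j k.1 (fun h => hk (Subtype.ext h))]
  have hflip' : flipc y' ⟨i, hi⟩ = y := by
    funext k
    by_cases hk : k = ⟨i, hi⟩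
    · subst hk
      rw [show flipc y' ⟨i, hi⟩ ⟨i, hi⟩ = !(y' ⟨i, hi⟩) from Function.update_self ..]
      rw [hyk, hy'k, hx'i, Bool.not_not]
    · rw [show flipc y' ⟨i, hi⟩ k = y' k from Function.update_of_ne hk _ _, hyk, hy'k,
        hx'j k.1 (fun h => hk (Subtype.ext h))]
  have hstep1 : Step ft y y' := by
    refine ⟨⟨i, hi⟩, ?_, hflip.symm⟩
    rw [hfty, hyk, hfxi]
    exact (Bool.not_ne_self (x i)).symm ∘ Eq.symm
  have hstep2 : Step ft y' y := by
    refine ⟨⟨i, hi⟩, ?_, hflip'.symm⟩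
    rw [hfty', hy'k, hfx'i]
    exact (Bool.not_ne_self (x' i)).symm ∘ Eq.symm
  refine ⟨⟨⟨y, Or.inl rfl⟩, ?_, ?_⟩, hyy'⟩
  · rintro z hz w ⟨k, hk, rfl⟩
    rcases hz with rfl | rfl
    · rw [hfty, hyk] at hk
      have hki : k.1 = i := by
        by_contra h; exact hk (hfx k.1 h)
      have : k = (⟨i, hi⟩ : {j : Fin n // j ≠ v}) := Subtype.ext hki
      rw [this, hflip]; exact Or.inr rfl
    · rw [hfty', hy'k] at hk
      have hki : k.1 = i := by
        by_contra h; exact hk (hfx' k.1 h)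
      have : k = (⟨i, hi⟩ : {j : Fin n // j ≠ v}) := Subtype.ext hki
      rw [this, hflip']; exact Or.inl rfl
  · intro B hB hBne hBtrap
    have hboth : y ∈ B ∧ y' ∈ B := by
      obtain ⟨w, hw⟩ := hBne
      rcases hB hw with rfl | rfl
      · exact ⟨hw, hBtrap _ hw _ hstep1⟩
      · exact ⟨hBtrap _ hw _ hstep2, hw⟩
    apply Set.Subset.antisymm hB
    rintro z (rfl | rfl)
    · exact hboth.1
    · exact hboth.2
end

section
/- Let f : 𝔹ⁿ → 𝔹ⁿ have no positive loop at v and let f̃ be the generalized reduced network. If Ã ⊆ 𝔹^{n-1} is an attractor of AD(f̃), then there exists at most one attractor of AD(f) intersecting π^{-1}(Ã). Consequently the number of attractors of AD(f) is at most the number of attractors of AD(f̃). -/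
open Function Relation

/-!
Since `f` has no positive loop at `v`, every state `x` reaches both `R⁰(x)` and `R¹(x)` in at most
one step, and these are `S⁰(π x)` and `S¹(π x)`. Hence a transition of `f̃` out of `π x`, which by
the and/or form of `f̃` is a transition of `f` out of `S⁰(π x)` or `S¹(π x)` at a coordinate other
than `v`, lifts to a path of `f` from `x`. So `π` maps trap sets of `f` to trap sets of `f̃`, and every
attractor `A` of `f` meets `π⁻¹(Ã)` for some attractor `Ã` of `f̃`. If two attractors `A₁ ∋ x₁`,
`A₂ ∋ x₂` have `π x₁, π x₂ ∈ Ã`, lifting a path from `π x₁` to `π x₂` inside `Ã` leads from `x₁` to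
some `x'` with `π x' = π x₂`; then `x'` and `x₂` both reach `R⁰(x₂)`, so `A₁ = A₂`. Thus `A ↦ Ã` is
injective.
-/

section Dynamics

variable {V : Type*} [DecidableEq V] {f : (V → Bool) → V → Bool}

theorem IsTrap.mem_of_reflTransGen {T : Set (V → Bool)} (hT : IsTrap f T) {x y : V → Bool}
    (hx : x ∈ T) (h : ReflTransGen (Step f) x y) : y ∈ T := by
  induction h with
  | refl => exact hx
  | tail _ hstep ih => exact hT _ ih _ hstep

theorem isTrap_reachable (f : (V → Bool) → V → Bool) (x : V → Bool) :
    IsTrap f {y | ReflTransGen (Step f) x y} :=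
  fun _ hy _ hstep => hy.tail hstep

theorem IsAttractor.reflTransGen {A : Set (V → Bool)} (hA : IsAttractor f A) {x y : V → Bool}
    (hx : x ∈ A) (hy : y ∈ A) : ReflTransGen (Step f) x y := by
  have hsub : {z | ReflTransGen (Step f) x z} ⊆ A := fun _ hz => hA.2.1.mem_of_reflTransGen hx hz
  rw [← hA.2.2 _ hsub ⟨x, .refl⟩ (isTrap_reachable f x)] at hy
  exact hy

theorem IsAttractor.eq_of_mem {A B : Set (V → Bool)} (hA : IsAttractor f A)
    (hB : IsAttractor f B) {x : V → Bool} (hxA : x ∈ A) (hxB : x ∈ B) : A = B := by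
  have hAB : IsTrap f (A ∩ B) := fun y hy z hz => ⟨hA.2.1 y hy.1 z hz, hB.2.1 y hy.2 z hz⟩
  exact (hA.2.2 _ Set.inter_subset_left ⟨x, hxA, hxB⟩ hAB).symm.trans
    (hB.2.2 _ Set.inter_subset_right ⟨x, hxA, hxB⟩ hAB)

theorem IsTrap.exists_isAttractor_subset [Finite V] {T : Set (V → Bool)} (hT : IsTrap f T)
    (hne : T.Nonempty) : ∃ A ⊆ T, IsAttractor f A := by
  obtain ⟨A, ⟨hAT, hAne, hA⟩, hmin⟩ :=
    (Set.toFinite {B | B ⊆ T ∧ B.Nonempty ∧ IsTrap f B}).exists_minimal ⟨T, subset_rfl, hne, hT⟩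
  exact ⟨A, hAT, hAne, hA, fun B hBA hBne hB =>
    hBA.antisymm (hmin ⟨hBA.trans hAT, hBne, hB⟩ hBA)⟩

theorem reflTransGen_step_update_apply (f : (V → Bool) → V → Bool) (x : V → Bool) (i : V) :
    ReflTransGen (Step f) x (update x i (f x i)) := by
  by_cases h : f x i = x i
  · rw [h, update_eq_self]
  · refine .single ⟨i, h, ?_⟩
    rw [flipc, Bool.eq_not.mpr h]

end Dynamics

theorem ne_or_ne_of_ite_and_or_ne {b p q : Bool} (h : (if b then p && q else p || q) ≠ b) :
    p ≠ b ∨ q ≠ b := by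
  cases b <;> cases p <;> cases q <;> simp_all

structure IsGeneralizedReduction {n : ℕ} (f : (Fin n → Bool) → Fin n → Bool) (v : Fin n)
    (S0 S1 : ({i : Fin n // i ≠ v} → Bool) → Fin n → Bool)
    (ft : ({i : Fin n // i ≠ v} → Bool) → {i : Fin n // i ≠ v} → Bool) : Prop where
  S0_proj : ∀ x, S0 (proj v x) = Ra f v false x
  S1_proj : ∀ x, S1 (proj v x) = Ra f v true x
  apply : ∀ y i, ft y i = if y i then f (S0 y) i.1 && f (S1 y) i.1 else f (S0 y) i.1 || f (S1 y) i.1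

section Reduction

variable {n : ℕ} {f : (Fin n → Bool) → Fin n → Bool} {v : Fin n}

theorem Ra_apply_of_ne (a : Bool) (x : Fin n → Bool) {j : Fin n} (hj : j ≠ v) :
    Ra f v a x j = x j :=
  update_of_ne hj _ _

theorem proj_Ra (a : Bool) (x : Fin n → Bool) : proj v (Ra f v a x) = proj v x :=
  funext fun j => Ra_apply_of_ne a x j.2

theorem proj_flipc (x : Fin n → Bool) (i : {i : Fin n // i ≠ v}) :
    proj v (flipc x i) = flipc (proj v x) i := by
  funext j
  by_cases hji : j = i
  · subst hji; simp [proj, flipc]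
  · simp [proj, flipc, update_of_ne hji, update_of_ne (Subtype.coe_ne_coe.mpr hji)]

theorem update_eq_update_of_proj_eq {x y : Fin n → Bool} (hxy : proj v x = proj v y) (a : Bool) :
    update x v a = update y v a := by
  funext j
  by_cases hj : j = v
  · subst hj; simp
  · simp only [update_of_ne hj]
    exact congrFun hxy ⟨j, hj⟩

theorem Ra_eq_of_proj_eq (a : Bool) {x y : Fin n → Bool} (hxy : proj v x = proj v y) :
    Ra f v a x = Ra f v a y := by
  rw [Ra, Ra, update_eq_update_of_proj_eq hxy a, update_eq_update_of_proj_eq hxy]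

/-- `a ↦ f (x^{v=a}) v` is antitone, so if its value at `a` is `!b`, so is its value at `b`. -/
theorem NoPosLoop.apply_update_eq_or (hv : NoPosLoop f v) (x : Fin n → Bool) (a b : Bool) :
    f (update x v a) v = b ∨ f (update x v a) v = f (update x v b) v := by
  have hanti := hv x
  revert hanti
  cases a <;> cases b <;> cases f (update x v true) v <;> cases f (update x v false) v <;> simp

theorem NoPosLoop.reflTransGen_Ra (hv : NoPosLoop f v) (x : Fin n → Bool) (a : Bool) :
    ReflTransGen (Step f) x (Ra f v a x) := by
  have hself : Ra f v (x v) x = update x v (f x v) := by rw [Ra, update_eq_self]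
  rcases hv.apply_update_eq_or x a (x v) with h | h
  · rw [Ra, h, update_eq_self]
  · rw [Ra, h, ← Ra, hself]
    exact reflTransGen_step_update_apply f x v

theorem NoPosLoop.exists_reflTransGen_proj_eq_flipc (hv : NoPosLoop f v) {x : Fin n → Bool}
    {a : Bool} {i : {i : Fin n // i ≠ v}} (hi : f (Ra f v a x) i ≠ x i) :
    ∃ x' : Fin n → Bool, ReflTransGen (Step f) x x' ∧ proj v x' = flipc (proj v x) i :=
  ⟨flipc (Ra f v a x) i, (hv.reflTransGen_Ra x a).tail ⟨i, by rwa [Ra_apply_of_ne a x i.2], rfl⟩,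
    by rw [proj_flipc, proj_Ra]⟩

namespace IsGeneralizedReduction

variable {S0 S1 : ({i : Fin n // i ≠ v} → Bool) → Fin n → Bool}
  {ft : ({i : Fin n // i ≠ v} → Bool) → {i : Fin n // i ≠ v} → Bool}

theorem exists_reflTransGen_of_step (hred : IsGeneralizedReduction f v S0 S1 ft)
    (hv : NoPosLoop f v) {x : Fin n → Bool} {y : {i : Fin n // i ≠ v} → Bool}
    (h : Step ft (proj v x) y) : ∃ x', ReflTransGen (Step f) x x' ∧ proj v x' = y := by
  obtain ⟨i, hi, rfl⟩ := h
  rw [hred.apply] at hi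
  rcases ne_or_ne_of_ite_and_or_ne hi with h | h
  · rw [hred.S0_proj] at h
    exact hv.exists_reflTransGen_proj_eq_flipc h
  · rw [hred.S1_proj] at h
    exact hv.exists_reflTransGen_proj_eq_flipc h

theorem exists_reflTransGen_of_reflTransGen (hred : IsGeneralizedReduction f v S0 S1 ft)
    (hv : NoPosLoop f v) {x : Fin n → Bool} {y : {i : Fin n // i ≠ v} → Bool}
    (h : ReflTransGen (Step ft) (proj v x) y) :
    ∃ x', ReflTransGen (Step f) x x' ∧ proj v x' = y := by
  induction h with
  | refl => exact ⟨x, .refl, rfl⟩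
  | tail _ hstep ih =>
    obtain ⟨x', hxx', rfl⟩ := ih
    obtain ⟨x'', hx'x'', rfl⟩ := hred.exists_reflTransGen_of_step hv hstep
    exact ⟨x'', hxx'.trans hx'x'', rfl⟩

theorem isTrap_image_proj (hred : IsGeneralizedReduction f v S0 S1 ft) (hv : NoPosLoop f v)
    {T : Set (Fin n → Bool)} (hT : IsTrap f T) : IsTrap ft (proj v '' T) := by
  rintro _ ⟨x, hx, rfl⟩ y hstep
  obtain ⟨x', hxx', rfl⟩ := hred.exists_reflTransGen_of_step hv hstep
  exact ⟨x', hT.mem_of_reflTransGen hx hxx', rfl⟩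

theorem exists_isAttractor_inter_preimage_nonempty (hred : IsGeneralizedReduction f v S0 S1 ft)
    (hv : NoPosLoop f v) {A : Set (Fin n → Bool)} (hA : IsAttractor f A) :
    ∃ At, IsAttractor ft At ∧ (A ∩ proj v ⁻¹' At).Nonempty := by
  obtain ⟨At, hAtA, hAt⟩ :=
    (hred.isTrap_image_proj hv hA.2.1).exists_isAttractor_subset (hA.1.image _)
  obtain ⟨y, hy⟩ := hAt.1
  obtain ⟨x, hxA, rfl⟩ := hAtA hy
  exact ⟨At, hAt, x, hxA, hy⟩

theorem eq_of_inter_preimage_nonempty (hred : IsGeneralizedReduction f v S0 S1 ft)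
    (hv : NoPosLoop f v) {At : Set ({i : Fin n // i ≠ v} → Bool)} (hAt : IsAttractor ft At)
    {A B : Set (Fin n → Bool)} (hA : IsAttractor f A) (hB : IsAttractor f B)
    (hAAt : (A ∩ proj v ⁻¹' At).Nonempty) (hBAt : (B ∩ proj v ⁻¹' At).Nonempty) : A = B := by
  obtain ⟨x, hxA, hxAt⟩ := hAAt
  obtain ⟨y, hyB, hyAt⟩ := hBAt
  obtain ⟨x', hxx', hx'y⟩ :=
    hred.exists_reflTransGen_of_reflTransGen hv (hAt.reflTransGen hxAt hyAt)
  have hRa_mem_A : Ra f v false x' ∈ A :=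
    hA.2.1.mem_of_reflTransGen (hA.2.1.mem_of_reflTransGen hxA hxx') (hv.reflTransGen_Ra x' false)
  rw [Ra_eq_of_proj_eq false hx'y] at hRa_mem_A
  exact hA.eq_of_mem hB hRa_mem_A (hB.2.1.mem_of_reflTransGen hyB (hv.reflTransGen_Ra y false))

end IsGeneralizedReduction

end Reduction

theorem stmt14 (n : ℕ) (f : (Fin n → Bool) → Fin n → Bool) (v : Fin n)
    (hv : NoPosLoop f v)
    (S0 S1 : ({i : Fin n // i ≠ v} → Bool) → Fin n → Bool)
    (hS0 : ∀ x, S0 (proj v x) = Ra f v false x)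
    (hS1 : ∀ x, S1 (proj v x) = Ra f v true x)
    (ft : ({i : Fin n // i ≠ v} → Bool) → {i : Fin n // i ≠ v} → Bool)
    (hft : ∀ y i, ft y i = if y i then f (S0 y) i.1 && f (S1 y) i.1 else f (S0 y) i.1 || f (S1 y) i.1) :
    (∀ At : Set ({i : Fin n // i ≠ v} → Bool), IsAttractor ft At →
      ∀ A1 A2 : Set (Fin n → Bool), IsAttractor f A1 → IsAttractor f A2 →
        (A1 ∩ proj v ⁻¹' At).Nonempty → (A2 ∩ proj v ⁻¹' At).Nonempty → A1 = A2) ∧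
    Nat.card {A : Set (Fin n → Bool) | IsAttractor f A} ≤
      Nat.card {B : Set ({i : Fin n // i ≠ v} → Bool) | IsAttractor ft B} := by
  have hred : IsGeneralizedReduction f v S0 S1 ft := ⟨hS0, hS1, hft⟩
  refine ⟨fun _ hAt _ _ => hred.eq_of_inter_preimage_nonempty hv hAt, ?_⟩
  choose! φ hattr hmeets using
    fun A (hA : IsAttractor f A) => hred.exists_isAttractor_inter_preimage_nonempty hv hA
  refine Nat.card_le_card_of_injective (fun A => ⟨φ A, hattr A A.2⟩) fun A B hAB => ?_
  have hAB' : φ A = φ B := congrArg Subtype.val hAB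
  exact Subtype.ext <| hred.eq_of_inter_preimage_nonempty hv (hattr A A.2) A.2 B.2
    (hmeets A A.2) (hAB' ▸ hmeets B B.2)
end

section
/- Let f : 𝔹ⁿ → 𝔹ⁿ have no positive loop at v and let f̃ be the generalized reduced network. Then S(f̃) = S(f) + A(f,v), where S counts fixed points and A(f,v) counts two-state cyclic attractors of AD(f) consisting of states differing only in coordinate v. In particular S(f) ≤ S(f̃). -/
open Function Relation

namespace Stmt15Aux

variable {n : ℕ}

/-- Extend `y` to a full state with value `false` at `v`. -/
def ext (v : Fin n) (y : {i : Fin n // i ≠ v} → Bool) : Fin n → Bool :=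
  fun i => if h : i = v then false else y ⟨i, h⟩

/-- The state with projection `y` and value `b` at `v`. -/
def xb (v : Fin n) (b : Bool) (y : {i : Fin n // i ≠ v} → Bool) : Fin n → Bool :=
  Function.update (ext v y) v b

lemma xb_v (v : Fin n) (b : Bool) (y : {i : Fin n // i ≠ v} → Bool) : xb v b y v = b :=
  Function.update_self _ _ _

lemma xb_ne (v : Fin n) (b : Bool) (y : {i : Fin n // i ≠ v} → Bool) {i : Fin n} (h : i ≠ v) :
    xb v b y i = y ⟨i, h⟩ := by
  rw [xb, Function.update_of_ne h]
  simp [ext, h]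

lemma proj_xb (v : Fin n) (b : Bool) (y : {i : Fin n // i ≠ v} → Bool) :
    proj v (xb v b y) = y := by
  funext i
  exact xb_ne v b y i.2

lemma proj_ext (v : Fin n) (y : {i : Fin n // i ≠ v} → Bool) : proj v (ext v y) = y := by
  funext i
  simp [proj, ext, i.2]

lemma xb_proj (v : Fin n) (b : Bool) (x : Fin n → Bool) :
    xb v b (proj v x) = Function.update x v b := by
  funext i
  by_cases h : i = v
  · subst h; rw [xb_v, Function.update_self]
  · rw [xb_ne v b _ h, Function.update_of_ne h]; rfl

lemma flipc_apply_ne {V : Type*} [DecidableEq V] (x : V → Bool) {v i : V} (h : i ≠ v) :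
    flipc x v i = x i := Function.update_of_ne h _ _

lemma flipc_xb (v : Fin n) (b : Bool) (y : {i : Fin n // i ≠ v} → Bool) :
    flipc (xb v b y) v = xb v (!b) y := by
  funext i
  by_cases h : i = v
  · subst h; simp [flipc, xb_v]
  · rw [flipc_apply_ne _ h, xb_ne v b y h, xb_ne v (!b) y h]

lemma flipc_v {V : Type*} [DecidableEq V] (x : V → Bool) (v : V) : flipc x v v = !(x v) :=
  Function.update_self _ _ _

lemma flipc_ne_self {V : Type*} [DecidableEq V] (x : V → Bool) (v : V) : flipc x v ≠ x := by
  intro h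
  have := congrFun h v
  rw [flipc_v] at this
  simp at this

lemma flipc_flipc {V : Type*} [DecidableEq V] (x : V → Bool) (v : V) :
    flipc (flipc x v) v = x := by
  funext i
  by_cases h : i = v
  · subst h; simp [flipc]
  · simp [flipc, Function.update_of_ne h]

/-- `c_a(y)`: the value `f` assigns to `v` on the extension of `y` with `v = a`. -/
def cc (f : (Fin n → Bool) → Fin n → Bool) (v : Fin n) (a : Bool)
    (y : {i : Fin n // i ≠ v} → Bool) : Bool :=
  f (xb v a y) v

lemma fxb_v (f : (Fin n → Bool) → Fin n → Bool) (v : Fin n) (b : Bool)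
    (y : {i : Fin n // i ≠ v} → Bool) : f (xb v b y) v = cc f v b y := rfl

/-- Characterization of two-element attractors `{x, flipc x v}`. -/
lemma attr_props (f : (Fin n → Bool) → Fin n → Bool) (v : Fin n) (x : Fin n → Bool)
    (hA : IsAttractor f ({x, flipc x v} : Set (Fin n → Bool))) :
    f x v ≠ x v ∧ ∀ i, i ≠ v → f x i = x i := by
  obtain ⟨hne, htrap, hmin⟩ := hA
  have hxmem : x ∈ ({x, flipc x v} : Set (Fin n → Bool)) := Or.inl rfl
  have hstep : ∀ i, i ≠ v → f x i = x i := by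
    intro i hiv
    by_contra hfi
    have hmem : flipc x i ∈ ({x, flipc x v} : Set (Fin n → Bool)) :=
      htrap x hxmem (flipc x i) ⟨i, hfi, rfl⟩
    rcases hmem with h | h
    · exact flipc_ne_self x i h
    · have := congrFun h i
      rw [flipc_v, flipc_apply_ne x hiv] at this
      simp at this
  refine ⟨?_, hstep⟩
  intro hfv
  have htrap1 : IsTrap f ({x} : Set (Fin n → Bool)) := by
    intro a ha z hz
    rcases ha with rfl
    obtain ⟨i, hi, rfl⟩ := hz
    by_cases h : i = v
    · subst h; exact absurd hfv hi
    · exact absurd (hstep i h) hi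
  have h1 := hmin {x} (Set.singleton_subset_iff.mpr hxmem) ⟨x, rfl⟩ htrap1
  have : flipc x v ∈ ({x} : Set (Fin n → Bool)) := by
    rw [h1]; exact Or.inr rfl
  exact flipc_ne_self x v this

/-- Construction of two-element attractors. -/
lemma attr_of (f : (Fin n → Bool) → Fin n → Bool) (v : Fin n) (y : {i : Fin n // i ≠ v} → Bool)
    (h0 : f (xb v false y) v = true) (h1 : f (xb v true y) v = false)
    (hfix : ∀ i : {i : Fin n // i ≠ v},
      f (xb v false y) i.1 = y i ∧ f (xb v true y) i.1 = y i) :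
    IsAttractor f ({xb v false y, xb v true y} : Set (Fin n → Bool)) := by
  have hflip0 : flipc (xb v false y) v = xb v true y := flipc_xb v false y
  have hflip1 : flipc (xb v true y) v = xb v false y := flipc_xb v true y
  have hs01 : Step f (xb v false y) (xb v true y) :=
    ⟨v, by rw [h0, xb_v]; simp, hflip0.symm⟩
  have hs10 : Step f (xb v true y) (xb v false y) :=
    ⟨v, by rw [h1, xb_v]; simp, hflip1.symm⟩
  refine ⟨⟨xb v false y, Or.inl rfl⟩, ?_, ?_⟩
  · intro x hx z hz
    obtain ⟨i, hi, rfl⟩ := hz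
    rcases hx with rfl | rfl
    · by_cases h : i = v
      · subst h; rw [hflip0]; exact Or.inr rfl
      · rw [(hfix ⟨i, h⟩).1, (xb_ne v false y h).symm] at hi
        exact absurd rfl hi
    · by_cases h : i = v
      · subst h; rw [hflip1]; exact Or.inl rfl
      · rw [(hfix ⟨i, h⟩).2, (xb_ne v true y h).symm] at hi
        exact absurd rfl hi
  · intro B hB hBne htB
    have hboth : xb v false y ∈ B ∧ xb v true y ∈ B := by
      obtain ⟨w, hw⟩ := hBne
      rcases hB hw with rfl | rfl
      · exact ⟨hw, htB _ hw _ hs01⟩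
      · exact ⟨htB _ hw _ hs10, hw⟩
    apply Set.Subset.antisymm hB
    intro z hz
    rcases hz with rfl | rfl
    · exact hboth.1
    · exact hboth.2

end Stmt15Aux

open Stmt15Aux in
theorem stmt15 (n : ℕ) (f : (Fin n → Bool) → Fin n → Bool) (v : Fin n)
    (hv : NoPosLoop f v)
    (S0 S1 : ({i : Fin n // i ≠ v} → Bool) → Fin n → Bool)
    (hS0 : ∀ x, S0 (proj v x) = Ra f v false x)
    (hS1 : ∀ x, S1 (proj v x) = Ra f v true x)
    (ft : ({i : Fin n // i ≠ v} → Bool) → {i : Fin n // i ≠ v} → Bool)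
    (hft : ∀ y i, ft y i = if y i then f (S0 y) i.1 && f (S1 y) i.1 else f (S0 y) i.1 || f (S1 y) i.1) :
    Nat.card {y : {i : Fin n // i ≠ v} → Bool // ft y = y} =
      Nat.card {x : Fin n → Bool // f x = x} +
      Nat.card {A : Set (Fin n → Bool) | IsAttractor f A ∧ ∃ x, A = {x, flipc x v}} ∧
    Nat.card {x : Fin n → Bool // f x = x} ≤
      Nat.card {y : {i : Fin n // i ≠ v} → Bool // ft y = y} := by
  classical
  have hv' : ∀ y, cc f v true y = true → cc f v false y = true := fun y h => hv (ext v y) h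
  have hS0' : ∀ y, S0 y = xb v (cc f v false y) y := by
    intro y; have h := hS0 (ext v y); rwa [proj_ext] at h
  have hS1' : ∀ y, S1 y = xb v (cc f v true y) y := by
    intro y; have h := hS1 (ext v y); rwa [proj_ext] at h
  have hft' : ∀ y i, ft y i =
      if y i then f (xb v (cc f v false y) y) i.1 && f (xb v (cc f v true y) y) i.1
      else f (xb v (cc f v false y) y) i.1 || f (xb v (cc f v true y) y) i.1 := by
    intro y i; rw [hft, hS0', hS1']
  have hnotP : ∀ y, cc f v false y ≠ cc f v true y →
      cc f v false y = true ∧ cc f v true y = false := by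
    intro y h
    cases h0 : cc f v false y <;> cases h1 : cc f v true y <;>
      simp_all [hv' y]
  have hfixinfo : ∀ y, ft y = y → cc f v false y = true → cc f v true y = false →
      ∀ i : {i : Fin n // i ≠ v}, f (xb v false y) i.1 = y i ∧ f (xb v true y) i.1 = y i := by
    intro y hy h0 h1 i
    have h := congrFun hy i
    rw [hft' y i, h0, h1] at h
    cases hyi : y i <;> rw [hyi] at h <;> simp at h <;>
      exact ⟨h.2, h.1⟩
  -- the `P` case : c₀ = c₁ gives genuine fixed points of f
  have fixP : ∀ y, ft y = y → cc f v false y = cc f v true y →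
      f (xb v (cc f v false y) y) = xb v (cc f v false y) y := by
    intro y hy hP
    funext i
    by_cases h : i = v
    · rw [h, xb_v]
      show cc f v (cc f v false y) y = cc f v false y
      cases hc : cc f v false y
      · exact hc
      · rw [← hP]; exact hc
    · have hcf := congrFun hy ⟨i, h⟩
      rw [hft' y ⟨i, h⟩, ← hP] at hcf
      rw [xb_ne v _ y h]
      cases hyi : y ⟨i, h⟩ <;> rw [hyi] at hcf <;> simp at hcf <;> simp [hcf, hyi]
  have hccx : ∀ (x : Fin n → Bool) a, cc f v a (proj v x) = f (Function.update x v a) v := by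
    intro x a; rw [cc, xb_proj]
  have hxbx : ∀ x : Fin n → Bool, xb v (x v) (proj v x) = x := by
    intro x; rw [xb_proj]; exact Function.update_eq_self v x
  have hfixc : ∀ x, f x = x →
      cc f v false (proj v x) = x v ∧ cc f v true (proj v x) = x v := by
    intro x hx
    have hxv : f x v = x v := congrFun hx v
    cases hxv' : x v
    · have h0 : cc f v false (proj v x) = false := by
        rw [hccx, show Function.update x v false = x from by
          rw [← hxv']; exact Function.update_eq_self v x, hxv, hxv']
      refine ⟨h0, ?_⟩
      cases h1 : cc f v true (proj v x)
      · rfl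
      · have := hv' _ h1; rw [h0] at this; exact this.symm
    · have h1 : cc f v true (proj v x) = true := by
        rw [hccx, show Function.update x v true = x from by
          rw [← hxv']; exact Function.update_eq_self v x, hxv, hxv']
      exact ⟨hv' _ h1, h1⟩
  have hftfix : ∀ x, f x = x → ft (proj v x) = proj v x := by
    intro x hx
    funext i
    rw [hft' (proj v x) i, (hfixc x hx).1, (hfixc x hx).2, hxbx]
    have hfi : f x i.1 = proj v x i := congrFun hx i.1
    cases hyi : proj v x i <;> rw [hyi] at hfi <;> simp [hyi, hfi]
  -- first bijection
  let g1 : {y : {y : {i : Fin n // i ≠ v} → Bool // ft y = y} //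
      cc f v false y.1 = cc f v true y.1} → {x : Fin n → Bool // f x = x} :=
    fun y => ⟨xb v (cc f v false y.1.1) y.1.1, fixP y.1.1 y.1.2 y.2⟩
  have hg1 : Function.Bijective g1 := by
    constructor
    · intro a b h
      have h' : xb v (cc f v false a.1.1) a.1.1 = xb v (cc f v false b.1.1) b.1.1 :=
        Subtype.ext_iff.mp h
      have := congrArg (proj v) h'
      rw [proj_xb, proj_xb] at this
      exact Subtype.ext (Subtype.ext this)
    · rintro ⟨x, hx⟩
      refine ⟨⟨⟨proj v x, hftfix x hx⟩, (hfixc x hx).1.trans (hfixc x hx).2.symm⟩, ?_⟩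
      apply Subtype.ext
      show xb v (cc f v false (proj v x)) (proj v x) = x
      rw [(hfixc x hx).1, hxbx]
  -- second bijection
  have g2attr : ∀ y, ft y = y → cc f v false y ≠ cc f v true y →
      IsAttractor f ({xb v false y, xb v true y} : Set (Fin n → Bool)) := by
    intro y hy hne
    obtain ⟨h0, h1⟩ := hnotP y hne
    exact attr_of f v y h0 h1 (hfixinfo y hy h0 h1)
  let g2 : {y : {y : {i : Fin n // i ≠ v} → Bool // ft y = y} //
      ¬ cc f v false y.1 = cc f v true y.1} →
      {A : Set (Fin n → Bool) // IsAttractor f A ∧ ∃ x, A = {x, flipc x v}} :=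
    fun y => ⟨{xb v false y.1.1, xb v true y.1.1}, g2attr y.1.1 y.1.2 y.2,
      ⟨xb v false y.1.1, by rw [flipc_xb]; rfl⟩⟩
  have hg2 : Function.Bijective g2 := by
    constructor
    · intro a b h
      have hs : ({xb v false a.1.1, xb v true a.1.1} : Set (Fin n → Bool)) =
          {xb v false b.1.1, xb v true b.1.1} := Subtype.ext_iff.mp h
      have hmem : xb v false a.1.1 ∈
          ({xb v false b.1.1, xb v true b.1.1} : Set (Fin n → Bool)) := by
        rw [← hs]; exact Or.inl rfl
      rcases hmem with h' | h'
      · have := congrArg (proj v) h'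
        rw [proj_xb, proj_xb] at this
        exact Subtype.ext (Subtype.ext this)
      · have := congrFun h' v
        rw [xb_v, xb_v] at this
        exact absurd this (by simp)
    · rintro ⟨A, hA, x, hxA⟩
      subst hxA
      obtain ⟨x', hx'v, hA'⟩ : ∃ x', x' v = false ∧
          ({x, flipc x v} : Set (Fin n → Bool)) = {x', flipc x' v} := by
        cases hxv : x v
        · exact ⟨x, hxv, rfl⟩
        · refine ⟨flipc x v, by rw [flipc_v, hxv]; rfl, ?_⟩
          rw [flipc_flipc, Set.pair_comm]
      have hA2 : IsAttractor f ({x', flipc x' v} : Set (Fin n → Bool)) := hA' ▸ hA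
      have p1 := attr_props f v x' hA2
      have hA3 : IsAttractor f
          ({flipc x' v, flipc (flipc x' v) v} : Set (Fin n → Bool)) := by
        rw [flipc_flipc, Set.pair_comm]; exact hA2
      have p2 := attr_props f v (flipc x' v) hA3
      set y := proj v x' with hydef
      have hx0 : xb v false y = x' := by
        rw [hydef, xb_proj, ← hx'v]; exact Function.update_eq_self v x'
      have hx1 : xb v true y = flipc x' v := by
        funext i
        by_cases h : i = v
        · subst h; rw [xb_v, flipc_v, hx'v]; rfl
        · rw [xb_ne v true _ h, flipc_apply_ne _ h]; rfl
      have h0 : cc f v false y = true := by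
        have h' := p1.1
        rw [hx'v] at h'
        rw [cc, hx0]
        simpa using h'
      have h1 : cc f v true y = false := by
        have h' := p2.1
        rw [flipc_v, hx'v] at h'
        rw [cc, hx1]
        simpa using h'
      have hyfix : ft y = y := by
        funext i
        rw [hft' y i, h0, h1, hx0, hx1]
        have e1 : f x' i.1 = y i := by rw [p1.2 i.1 i.2]; rfl
        have e2 : f (flipc x' v) i.1 = y i := by
          rw [p2.2 i.1 i.2, flipc_apply_ne _ i.2]; rfl
        rw [e1, e2]
        cases hyi : y i <;> simp [hyi]
      refine ⟨⟨⟨y, hyfix⟩, by simp [h0, h1]⟩, ?_⟩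
      apply Subtype.ext
      show ({xb v false y, xb v true y} : Set (Fin n → Bool)) = {x, flipc x v}
      rw [hx0, hx1]
      exact hA'.symm
  haveI : Finite (Set (Fin n → Bool)) := inferInstanceAs (Finite ((Fin n → Bool) → Prop))
  let E := (Equiv.sumCompl fun y : {y : {i : Fin n // i ≠ v} → Bool // ft y = y} =>
      cc f v false y.1 = cc f v true y.1).symm.trans
    (Equiv.sumCongr (Equiv.ofBijective g1 hg1) (Equiv.ofBijective g2 hg2))
  have hcard : Nat.card {y : {i : Fin n // i ≠ v} → Bool // ft y = y} =
      Nat.card {x : Fin n → Bool // f x = x} +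
      Nat.card {A : Set (Fin n → Bool) // IsAttractor f A ∧ ∃ x, A = {x, flipc x v}} := by
    rw [Nat.card_congr E, Nat.card_sum]
  exact ⟨hcard, by rw [hcard]; exact Nat.le_add_right _ _⟩
end

section
/- Let f : 𝔹ⁿ → 𝔹ⁿ have no positive loop at v and let f̃ be the generalized reduced network obtained by eliminating v. If the interaction graph G(f̃) has a positive loop at a vertex i ≠ v (i.e., there exists x with (f̃_i(x̄^i) − f̃_i(x))·(x̄^i_i − x_i) = 1), then G(f) has either a positive loop at i or a positive cycle with support {i, v} (a positive edge i→v together with a positive edge v→i, or a negative edge i→v with a negative edge v→i). -/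
open Function Relation

lemma flipc_flipc {V : Type*} [DecidableEq V] (x : V → Bool) (i : V) :
    flipc (flipc x i) i = x := by
  funext j
  by_cases hj : j = i
  · subst hj; simp [flipc]
  · simp [flipc, Function.update_of_ne hj]

lemma step1 {V : Type*} [DecidableEq V] (g : (V → Bool) → V → Bool) (i : V)
    (h : HasEdge g i i 1) : ∃ y, y i = false ∧ g y i = false ∧ g (flipc y i) i = true := by
  obtain ⟨y, hy⟩ := h
  rcases hyi : y i with _ | _
  · refine ⟨y, hyi, ?_, ?_⟩ <;>
    · rcases h1 : g y i with _|_ <;> rcases h2 : g (flipc y i) i with _|_ <;>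
        simp [h1, h2, hyi, bint] at hy ⊢
  · refine ⟨flipc y i, by simp [flipc, hyi], ?_, ?_⟩ <;>
      [skip; rw [flipc_flipc]] <;>
    · rcases h1 : g y i with _|_ <;> rcases h2 : g (flipc y i) i with _|_ <;>
        simp [h1, h2, hyi, bint] at hy ⊢

lemma core (a b a' b' α β α' β' : Bool)
    (h1 : (if α then b else a) = false) (h2 : (if β then b else a) = false)
    (h3 : (if α' then b' else a') = true) (h4 : (if β' then b' else a') = true)
    (h5 : β = true → α = true) (h6 : β' = true → α' = true) :
    ((a = false ∧ a' = true) ∨ (b = false ∧ b' = true)) ∨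
    (((α = false ∧ α' = true) ∨ (β = false ∧ β' = true)) ∧
      ((a = false ∧ b = true) ∨ (a' = false ∧ b' = true))) ∨
    (((α = true ∧ α' = false) ∨ (β = true ∧ β' = false)) ∧
      ((a = true ∧ b = false) ∨ (a' = true ∧ b' = false))) := by
  revert h1 h2 h3 h4 h5 h6; revert a b a' b' α β α' β'; decide

lemma flip_upd_comm {w u : Fin n} (huw : u ≠ w) (z : Fin n → Bool) (c : Bool) :
    flipc (Function.update z w c) u = Function.update (flipc z u) w c := by
  unfold flipc
  rw [Function.update_of_ne huw]
  exact Function.update_comm huw.symm c (!z u) z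

lemma flip_upd_same (w : Fin n) (z : Fin n → Bool) (c : Bool) :
    flipc (Function.update z w c) w = Function.update z w (!c) := by
  unfold flipc
  simp

theorem stmt16 (n : ℕ) (f : (Fin n → Bool) → Fin n → Bool) (v : Fin n)
    (hv : NoPosLoop f v)
    (S0 S1 : ({i : Fin n // i ≠ v} → Bool) → Fin n → Bool)
    (hS0 : ∀ x, S0 (proj v x) = Ra f v false x)
    (hS1 : ∀ x, S1 (proj v x) = Ra f v true x)
    (ft : ({i : Fin n // i ≠ v} → Bool) → {i : Fin n // i ≠ v} → Bool)
    (hft : ∀ y i, ft y i = if y i then f (S0 y) i.1 && f (S1 y) i.1 else f (S0 y) i.1 || f (S1 y) i.1)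
    (i : {i : Fin n // i ≠ v})
    (h : HasEdge ft i i 1) :
    HasEdge f i.1 i.1 1 ∨
    (HasEdge f i.1 v 1 ∧ HasEdge f v i.1 1) ∨
    (HasEdge f i.1 v (-1) ∧ HasEdge f v i.1 (-1)) := by
  obtain ⟨y, hy0, hyf, hyt⟩ := step1 ft i h
  have hiv : i.1 ≠ v := i.2
  set x : Fin n → Bool := (fun j => if hj : j = v then false else y ⟨j, hj⟩) with hxdef
  set x' : Fin n → Bool := flipc x i.1 with hx'def
  have hproj : proj v x = y := by
    funext j
    simp [proj, hxdef, dif_neg j.2]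
  have hxi : x i.1 = false := by
    have := congrFun hproj i
    simp [proj] at this
    rw [this, hy0]
  have hx'i : x' i.1 = true := by
    simp [hx'def, flipc, hxi]
  have hproj' : proj v x' = flipc y i := by
    funext j
    by_cases hji : j = i
    · subst hji
      have := congrFun hproj j
      simp [proj] at this ⊢
      simp [hx'def, flipc, this]
    · have hj1 : j.1 ≠ i.1 := fun hc => hji (Subtype.ext hc)
      have := congrFun hproj j
      simp [proj] at this ⊢
      rw [hx'def]
      simp [flipc, Function.update_of_ne hj1, Function.update_of_ne hji, this]
  have e0 : S0 y = Function.update x v (f (Function.update x v false) v) := by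
    rw [← hproj, hS0]; rfl
  have e1 : S1 y = Function.update x v (f (Function.update x v true) v) := by
    rw [← hproj, hS1]; rfl
  have e0' : S0 (flipc y i) = Function.update x' v (f (Function.update x' v false) v) := by
    rw [← hproj', hS0]; rfl
  have e1' : S1 (flipc y i) = Function.update x' v (f (Function.update x' v true) v) := by
    rw [← hproj', hS1]; rfl
  rw [hft, hy0] at hyf
  simp only [Bool.false_eq_true, if_false, Bool.or_eq_false_iff] at hyf
  obtain ⟨hf0, hf1⟩ := hyf
  have hyi' : (flipc y i) i = true := by simp [flipc, hy0]
  rw [hft, hyi'] at hyt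
  simp only [if_true, Bool.and_eq_true] at hyt
  obtain ⟨ht0, ht1⟩ := hyt
  rw [e0] at hf0
  rw [e1] at hf1
  rw [e0'] at ht0
  rw [e1'] at ht1
  -- abbreviations
  have H1 : (if f (Function.update x v false) v then f (Function.update x v true) i.1
      else f (Function.update x v false) i.1) = false := by
    rcases hc : f (Function.update x v false) v with _|_ <;> rw [hc] at hf0 <;> simpa using hf0
  have H2 : (if f (Function.update x v true) v then f (Function.update x v true) i.1
      else f (Function.update x v false) i.1) = false := by
    rcases hc : f (Function.update x v true) v with _|_ <;> rw [hc] at hf1 <;> simpa using hf1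
  have H3 : (if f (Function.update x' v false) v then f (Function.update x' v true) i.1
      else f (Function.update x' v false) i.1) = true := by
    rcases hc : f (Function.update x' v false) v with _|_ <;> rw [hc] at ht0 <;> simpa using ht0
  have H4 : (if f (Function.update x' v true) v then f (Function.update x' v true) i.1
      else f (Function.update x' v false) i.1) = true := by
    rcases hc : f (Function.update x' v true) v with _|_ <;> rw [hc] at ht1 <;> simpa using ht1
  have key := core (f (Function.update x v false) i.1) (f (Function.update x v true) i.1)
      (f (Function.update x' v false) i.1) (f (Function.update x' v true) i.1)
      (f (Function.update x v false) v) (f (Function.update x v true) v)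
      (f (Function.update x' v false) v) (f (Function.update x' v true) v)
      H1 H2 H3 H4 (hv x) (hv x')
  have wloop : ∀ c : Bool, f (Function.update x v c) i.1 = false →
      f (Function.update x' v c) i.1 = true → HasEdge f i.1 i.1 1 := by
    intro c hA hB
    refine ⟨Function.update x v c, ?_⟩
    rw [flip_upd_comm hiv, ← hx'def, hA, hB, Function.update_of_ne hiv, hxi]
    decide
  have wiv : ∀ c : Bool, ∀ s : Bool, f (Function.update x v c) v = s →
      f (Function.update x' v c) v = !s → HasEdge f i.1 v (bint (!s) - bint s) := by
    intro c s hA hB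
    refine ⟨Function.update x v c, ?_⟩
    rw [flip_upd_comm hiv, ← hx'def, hA, hB, Function.update_of_ne hiv, hxi]
    cases s <;> decide
  have wvi : ∀ z : Fin n → Bool, ∀ s : Bool, f (Function.update z v false) i.1 = s →
      f (Function.update z v true) i.1 = !s → HasEdge f v i.1 (bint (!s) - bint s) := by
    intro z s hA hB
    refine ⟨Function.update z v false, ?_⟩
    rw [flip_upd_same]
    simp only [Bool.not_false, Function.update_idem, Function.update_self]
    rw [hA, hB]
    cases s <;> decide
  have s1 : bint (!false) - bint false = (1 : ℤ) := by decide
  have s2 : bint (!true) - bint true = (-1 : ℤ) := by decide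
  rcases key with (⟨hA, hB⟩ | ⟨hA, hB⟩) | ⟨hIV, hVI⟩ | ⟨hIV, hVI⟩
  · exact Or.inl (wloop false hA hB)
  · exact Or.inl (wloop true hA hB)
  · refine Or.inr (Or.inl ⟨?_, ?_⟩)
    · rcases hIV with ⟨hA, hB⟩ | ⟨hA, hB⟩
      · exact s1 ▸ wiv false false hA hB
      · exact s1 ▸ wiv true false hA hB
    · rcases hVI with ⟨hA, hB⟩ | ⟨hA, hB⟩
      · exact s1 ▸ wvi x false hA hB
      · exact s1 ▸ wvi x' false hA hB
  · refine Or.inr (Or.inr ⟨?_, ?_⟩)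
    · rcases hIV with ⟨hA, hB⟩ | ⟨hA, hB⟩
      · exact s2 ▸ wiv false true hA hB
      · exact s2 ▸ wiv true true hA hB
    · rcases hVI with ⟨hA, hB⟩ | ⟨hA, hB⟩
      · exact s2 ▸ wvi x true hA hB
      · exact s2 ▸ wvi x' true hA hB
end

section
/- Let f : 𝔹ⁿ → 𝔹ⁿ have no positive loop at v and let f̃ be the generalized reduced network. If G(f̃) has an edge j → i of sign s with i ≠ j (both distinct from v), then G(f) has an edge j → i of sign s, or there are signs s₁, s₂ with s₁·s₂ = s such that G(f) has an edge j → v of sign s₁ and an edge v → i of sign s₂. -/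
open Function Relation

lemma key17 (s : ℤ) (hs : s = 1 ∨ s = -1)
    (yi yj c0 c1 c0p c1p Af At Afp Atp : Bool)
    (h1 : c1 = true → c0 = true) (h2 : c1p = true → c0p = true)
    (heq : (bint (cond yi (cond c0p Atp Afp && cond c1p Atp Afp) (cond c0p Atp Afp || cond c1p Atp Afp))
        - bint (cond yi (cond c0 At Af && cond c1 At Af) (cond c0 At Af || cond c1 At Af)))
        * (bint (!yj) - bint yj) = s) :
    ((bint Atp - bint At) * (bint (!yj) - bint yj) = s
      ∨ (bint Afp - bint Af) * (bint (!yj) - bint yj) = s)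
    ∨ (((bint c0p - bint c0) * (bint (!yj) - bint yj) = 1
          ∨ (bint c1p - bint c1) * (bint (!yj) - bint yj) = 1)
        ∧ (bint At - bint Af = s ∨ bint Atp - bint Afp = s))
    ∨ (((bint c0p - bint c0) * (bint (!yj) - bint yj) = -1
          ∨ (bint c1p - bint c1) * (bint (!yj) - bint yj) = -1)
        ∧ (bint At - bint Af = -s ∨ bint Atp - bint Afp = -s)) := by
  rcases hs with rfl | rfl <;>
    revert yi yj c0 c1 c0p c1p Af At Afp Atp h1 h2 heq <;> decide

lemma flipc_update {V : Type*} [DecidableEq V] (x : V → Bool) (v j : V) (a : Bool)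
    (h : j ≠ v) :
    flipc (Function.update x v a) j = Function.update (flipc x j) v a := by
  unfold flipc
  rw [Function.update_of_ne h, Function.update_comm h]

lemma flipc_update_self {V : Type*} [DecidableEq V] (x : V → Bool) (v : V) :
    flipc (Function.update x v false) v = Function.update x v true := by
  simp [flipc, Function.update_idem]

theorem stmt17 (n : ℕ) (f : (Fin n → Bool) → Fin n → Bool) (v : Fin n)
    (hv : NoPosLoop f v)
    (S0 S1 : ({i : Fin n // i ≠ v} → Bool) → Fin n → Bool)
    (hS0 : ∀ x, S0 (proj v x) = Ra f v false x)
    (hS1 : ∀ x, S1 (proj v x) = Ra f v true x)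
    (ft : ({i : Fin n // i ≠ v} → Bool) → {i : Fin n // i ≠ v} → Bool)
    (hft : ∀ y i, ft y i = if y i then f (S0 y) i.1 && f (S1 y) i.1 else f (S0 y) i.1 || f (S1 y) i.1)
    (j i : {i : Fin n // i ≠ v}) (hij : i ≠ j) (s : ℤ) (hs : s = 1 ∨ s = -1)
    (h : HasEdge ft j i s) :
    HasEdge f j.1 i.1 s ∨
    ∃ s1 s2 : ℤ, s1 * s2 = s ∧ HasEdge f j.1 v s1 ∧ HasEdge f v i.1 s2 := by
  classical
  obtain ⟨y, hy⟩ := h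
  set x : Fin n → Bool := fun k => if h : k = v then false else y ⟨k, h⟩ with hxdef
  set x' : Fin n → Bool := flipc x j.1 with hx'def
  have hprojx : proj v x = y := by
    funext k
    simp [proj, hxdef, k.2]
  have hxj : x j.1 = y j := by simp [hxdef, j.2]
  have hx'j : x' j.1 = !(y j) := by simp [hx'def, flipc, hxj]
  have hprojx' : proj v x' = flipc y j := by
    funext k
    rcases eq_or_ne k j with rfl | hk
    · simp [proj, hx'def, flipc, hxj]
    · have hk1 : k.1 ≠ j.1 := fun hh => hk (Subtype.ext hh)
      simp [proj, hx'def, flipc, Function.update_of_ne hk1, Function.update_of_ne hk,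
        hxdef, k.2]
  obtain ⟨c0, hc0⟩ : ∃ b, f (Function.update x v false) v = b := ⟨_, rfl⟩
  obtain ⟨c1, hc1⟩ : ∃ b, f (Function.update x v true) v = b := ⟨_, rfl⟩
  obtain ⟨c0p, hc0p⟩ : ∃ b, f (Function.update x' v false) v = b := ⟨_, rfl⟩
  obtain ⟨c1p, hc1p⟩ : ∃ b, f (Function.update x' v true) v = b := ⟨_, rfl⟩
  obtain ⟨Af, hAf⟩ : ∃ b, f (Function.update x v false) i.1 = b := ⟨_, rfl⟩
  obtain ⟨At, hAt⟩ : ∃ b, f (Function.update x v true) i.1 = b := ⟨_, rfl⟩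
  obtain ⟨Afp, hAfp⟩ : ∃ b, f (Function.update x' v false) i.1 = b := ⟨_, rfl⟩
  obtain ⟨Atp, hAtp⟩ : ∃ b, f (Function.update x' v true) i.1 = b := ⟨_, rfl⟩
  have hAfun : ∀ b, f (Function.update x v b) i.1 = cond b At Af := by
    intro b; cases b
    · exact hAf
    · exact hAt
  have hAfun' : ∀ b, f (Function.update x' v b) i.1 = cond b Atp Afp := by
    intro b; cases b
    · exact hAfp
    · exact hAtp
  have hS0y : S0 y = Function.update x v c0 := by
    rw [← hprojx, hS0]; unfold Ra; rw [hc0]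
  have hS1y : S1 y = Function.update x v c1 := by
    rw [← hprojx, hS1]; unfold Ra; rw [hc1]
  have hS0y' : S0 (flipc y j) = Function.update x' v c0p := by
    rw [← hprojx', hS0]; unfold Ra; rw [hc0p]
  have hS1y' : S1 (flipc y j) = Function.update x' v c1p := by
    rw [← hprojx', hS1]; unfold Ra; rw [hc1p]
  have hyi : flipc y j i = y i := Function.update_of_ne hij _ _
  have hFy : ft y i = cond (y i) (cond c0 At Af && cond c1 At Af)
      (cond c0 At Af || cond c1 At Af) := by
    rw [hft, hS0y, hS1y, hAfun c0, hAfun c1]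
    cases y i <;> rfl
  have hFy' : ft (flipc y j) i = cond (y i) (cond c0p Atp Afp && cond c1p Atp Afp)
      (cond c0p Atp Afp || cond c1p Atp Afp) := by
    rw [hft, hS0y', hS1y', hAfun' c0p, hAfun' c1p, hyi]
    cases y i <;> rfl
  have heq : (bint (cond (y i) (cond c0p Atp Afp && cond c1p Atp Afp)
        (cond c0p Atp Afp || cond c1p Atp Afp))
      - bint (cond (y i) (cond c0 At Af && cond c1 At Af)
        (cond c0 At Af || cond c1 At Af)))
      * (bint (!(y j)) - bint (y j)) = s := by
    rw [← hFy, ← hFy']; exact hy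
  have h1 : c1 = true → c0 = true := by rw [← hc0, ← hc1]; exact hv x
  have h2 : c1p = true → c0p = true := by rw [← hc0p, ← hc1p]; exact hv x'
  have hflip : ∀ b : Bool, flipc (Function.update x v b) j.1 = Function.update x' v b :=
    fun b => flipc_update x v j.1 b j.2
  have hzj : ∀ b : Bool, Function.update x v b j.1 = y j := by
    intro b; rw [Function.update_of_ne j.2, hxj]
  have edgeJI : ∀ b : Bool, HasEdge f j.1 i.1
      ((bint (f (Function.update x' v b) i.1) - bint (f (Function.update x v b) i.1))
        * (bint (!(y j)) - bint (y j))) := by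
    intro b
    exact ⟨Function.update x v b, by rw [hflip b, hzj b]⟩
  have edgeJV : ∀ b : Bool, HasEdge f j.1 v
      ((bint (f (Function.update x' v b) v) - bint (f (Function.update x v b) v))
        * (bint (!(y j)) - bint (y j))) := by
    intro b
    exact ⟨Function.update x v b, by rw [hflip b, hzj b]⟩
  have edgeVI : HasEdge f v i.1 (bint At - bint Af) := by
    refine ⟨Function.update x v false, ?_⟩
    rw [flipc_update_self, hAt, hAf, Function.update_self]
    simp [bint]
  have edgeVI' : HasEdge f v i.1 (bint Atp - bint Afp) := by
    refine ⟨Function.update x' v false, ?_⟩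
    rw [flipc_update_self, hAtp, hAfp, Function.update_self]
    simp [bint]
  rcases key17 s hs (y i) (y j) c0 c1 c0p c1p Af At Afp Atp h1 h2 heq with
    (hk | hk) | ⟨(hk1 | hk1), hk2⟩ | ⟨(hk1 | hk1), hk2⟩
  · left; have := edgeJI true; rwa [hAt, hAtp, hk] at this
  · left; have := edgeJI false; rwa [hAf, hAfp, hk] at this
  · right
    refine ⟨1, s, one_mul s, ?_, ?_⟩
    · have := edgeJV false; rwa [hc0, hc0p, hk1] at this
    · rcases hk2 with hk2 | hk2
      · rwa [hk2] at edgeVI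
      · rwa [hk2] at edgeVI'
  · right
    refine ⟨1, s, one_mul s, ?_, ?_⟩
    · have := edgeJV true; rwa [hc1, hc1p, hk1] at this
    · rcases hk2 with hk2 | hk2
      · rwa [hk2] at edgeVI
      · rwa [hk2] at edgeVI'
  · right
    refine ⟨-1, -s, by ring, ?_, ?_⟩
    · have := edgeJV false; rwa [hc0, hc0p, hk1] at this
    · rcases hk2 with hk2 | hk2
      · rwa [hk2] at edgeVI
      · rwa [hk2] at edgeVI'
  · right
    refine ⟨-1, -s, by ring, ?_, ?_⟩
    · have := edgeJV true; rwa [hc1, hc1p, hk1] at this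
    · rcases hk2 with hk2 | hk2
      · rwa [hk2] at edgeVI
      · rwa [hk2] at edgeVI'
end

section
/- Let f be a Boolean network on vertex set V, let W ⊂ V and ∅ ≠ I ⊆ V∖W, and suppose no vertex of W has a path in G(f) to any vertex of I. If AD(f) has a path from x to y with y_I = x̄_I (all coordinates in I flipped), then AD(f) has a path from x to a state z with z_I = x̄_I and z_W = x_W. -/
open Function Relation

/-- Unsigned edge of the interaction graph: `f_i` depends on coordinate `j`. -/
def EdgeIG {n : ℕ} (f : (Fin n → Bool) → Fin n → Bool) (j i : Fin n) : Prop :=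
  ∃ x, f (flipc x j) i ≠ f x i


lemma indep_aux {n : ℕ} (f : (Fin n → Bool) → Fin n → Bool) (i : Fin n) (S : Set (Fin n))
    (h : ∀ j ∈ S, ∀ x, f (flipc x j) i = f x i) :
    ∀ k, ∀ u v : Fin n → Bool, (∀ j, j ∉ S → u j = v j) →
      (Finset.univ.filter (fun j => u j ≠ v j)).card ≤ k → f u i = f v i := by
  intro k
  induction k with
  | zero =>
    intro u v huv hc
    have : u = v := by
      funext j
      by_contra hj
      have : j ∈ Finset.univ.filter (fun j => u j ≠ v j) := by simp [hj]
      have := Finset.card_pos.mpr ⟨j, this⟩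
      omega
    rw [this]
  | succ k ih =>
    intro u v huv hc
    by_cases he : u = v
    · rw [he]
    · obtain ⟨j, hj⟩ : ∃ j, u j ≠ v j := by
        by_contra hno; push_neg at hno; exact he (funext hno)
      have hjS : j ∈ S := by by_contra hjs; exact hj (huv j hjs)
      have hfix : flipc u j j = v j := by
        simp only [flipc, Function.update_self]
        cases hbu : u j <;> cases hbv : v j <;> simp_all
      have h1 : f u i = f (flipc u j) i := (h j hjS u).symm
      refine h1.trans (ih (flipc u j) v ?_ ?_)
      · intro j' hj'
        have hne : j' ≠ j := by rintro rfl; exact hj' hjS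
        rw [flipc, Function.update_of_ne hne]; exact huv j' hj'
      · have hsub : (Finset.univ.filter (fun j' => flipc u j j' ≠ v j')) ⊆
            (Finset.univ.filter (fun j' => u j' ≠ v j')).erase j := by
          intro j' hj'
          simp only [Finset.mem_filter, Finset.mem_univ, true_and] at hj'
          by_cases hne : j' = j
          · subst hne; exact absurd hfix hj'
          · refine Finset.mem_erase.mpr ⟨hne, ?_⟩
            simp only [Finset.mem_filter, Finset.mem_univ, true_and]
            rwa [flipc, Function.update_of_ne hne] at hj'
        have hjmem : j ∈ Finset.univ.filter (fun j' => u j' ≠ v j') := by simp [hj]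
        have := Finset.card_le_card hsub
        have := Finset.card_erase_of_mem hjmem
        omega

lemma indep {n : ℕ} (f : (Fin n → Bool) → Fin n → Bool) (i : Fin n) (S : Set (Fin n))
    (h : ∀ j ∈ S, ∀ x, f (flipc x j) i = f x i)
    (u v : Fin n → Bool) (huv : ∀ j, j ∉ S → u j = v j) : f u i = f v i :=
  indep_aux f i S h _ u v huv le_rfl

theorem stmt18 (n : ℕ) (f : (Fin n → Bool) → Fin n → Bool)
    (W I : Set (Fin n)) (hW : W ≠ Set.univ) (hI : I ⊆ Wᶜ) (hIne : I.Nonempty)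
    (hpath : ∀ w ∈ W, ∀ i ∈ I, ¬ Relation.ReflTransGen (EdgeIG f) w i)
    (x y : Fin n → Bool)
    (hxy : Relation.ReflTransGen (Step f) x y)
    (hflip : ∀ i ∈ I, y i = !(x i)) :
    ∃ z, Relation.ReflTransGen (Step f) x z ∧
      (∀ i ∈ I, z i = !(x i)) ∧ ∀ w ∈ W, z w = x w := by
  classical
  set R : Set (Fin n) := {i | ∃ w ∈ W, Relation.ReflTransGen (EdgeIG f) w i} with hRdef
  have hWR : W ⊆ R := fun w hw => ⟨w, hw, Relation.ReflTransGen.refl⟩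
  have hIR : ∀ i ∈ I, i ∉ R := by
    rintro i hi ⟨w, hw, hp⟩
    exact hpath w hw i hi hp
  have key : ∀ i, i ∉ R → ∀ j ∈ R, ∀ x, f (flipc x j) i = f x i := by
    intro i hiR j hjR x
    by_contra hne
    obtain ⟨w, hw, hp⟩ := hjR
    exact hiR ⟨w, hw, hp.tail ⟨x, hne⟩⟩
  have main : ∀ y, Relation.ReflTransGen (Step f) x y →
      ∃ z, Relation.ReflTransGen (Step f) x z ∧ (∀ j, j ∉ R → z j = y j) ∧
        (∀ j ∈ R, z j = x j) := by
    intro y hxy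
    induction hxy with
    | refl => exact ⟨x, Relation.ReflTransGen.refl, fun _ _ => rfl, fun _ _ => rfl⟩
    | @tail b c hb hstep ih =>
      obtain ⟨z, hz1, hz2, hz3⟩ := ih
      obtain ⟨i, hfi, rfl⟩ := hstep
      by_cases hiR : i ∈ R
      · refine ⟨z, hz1, ?_, hz3⟩
        intro j hj
        have hne : j ≠ i := by rintro rfl; exact hj hiR
        rw [flipc, Function.update_of_ne hne]
        exact hz2 j hj
      · have hzb : f z i = f b i := indep f i R (key i hiR) z b hz2
        have hzi : z i = b i := hz2 i hiR
        have hstep' : Step f z (flipc z i) := ⟨i, by rw [hzb, hzi]; exact hfi, rfl⟩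
        refine ⟨flipc z i, hz1.tail hstep', ?_, ?_⟩
        · intro j hj
          by_cases hne : j = i
          · subst hne
            rw [flipc, flipc, Function.update_self, Function.update_self, hzi]
          · rw [flipc, flipc, Function.update_of_ne hne, Function.update_of_ne hne]
            exact hz2 j hj
        · intro j hj
          have hne : j ≠ i := by rintro rfl; exact hiR hj
          rw [flipc, Function.update_of_ne hne]
          exact hz3 j hj
  obtain ⟨z, hz1, hz2, hz3⟩ := main y hxy
  refine ⟨z, hz1, ?_, ?_⟩
  · intro i hi
    rw [hz2 i (hIR i hi)]
    exact hflip i hi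
  · intro w hw
    exact hz3 w (hWR hw)
end

section
/- Let f : 𝔹ⁿ → 𝔹ⁿ be a Boolean network whose interaction graph has a positive feedback vertex set I (a set of vertices meeting every cycle of positive sign in G(f)). Then the asynchronous dynamics AD(f) has at most 2^{|I|} attractors. -/
open Function Relation

/-- `I` is a positive feedback vertex set of `G(f)`: it meets every positive cycle. -/
def PosFVS {n : ℕ} (f : (Fin n → Bool) → Fin n → Bool) (I : Finset (Fin n)) : Prop :=
  ∀ (k : ℕ) (c : Fin (k + 1) → Fin n) (s : Fin (k + 1) → ℤ),
    Function.Injective c →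
    (∀ i, HasEdge f (c i) (c (i + 1)) (s i)) →
    (∀ i, s i = 1 ∨ s i = -1) →
    (∏ i, s i) = 1 →
    ∃ i, c i ∈ I

/-!
Take two distinct attractors `A ∋ x` and `B ∋ z` with `x` and `z` agreeing on `I`, and choose
them with `x` and `z` as close as possible in Hamming distance. A coordinate on which they differ
cannot be updated in `x` or in `z`, for the update would stay in the attractor and bring the two
states closer; so on the difference set `D` both `x` and `z` are fixed by `f`. Then `f_i` separates
`x` from `z` for every `i ∈ D`, and flipping the coordinates of `D` one at a time shows that `i` has
an in-neighbour `j ∈ D` whose edge has sign `(z_i - x_i)(z_j - x_j)`. Following in-neighbours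
inside the finite set `D` closes a cycle, and the product of these signs around it is a product of
squares, hence `1`. This positive cycle avoids `I`, a contradiction. So the restriction to `I` of
any point of an attractor determines the attractor.
-/

section Flip

variable {V : Type*} [DecidableEq V]

@[simp]
lemma flipc_apply_self (x : V → Bool) (i : V) : flipc x i i = !x i := by
  simp [flipc]

lemma flipc_apply_of_ne (x : V → Bool) {i j : V} (h : j ≠ i) : flipc x i j = x j :=
  Function.update_of_ne h _ _

lemma hammingDist_flipc_lt [Fintype V] {x z : V → Bool} {i : V} (h : x i ≠ z i) :
    hammingDist (flipc x i) z < hammingDist x z := by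
  refine Finset.card_lt_card (Finset.ssubset_iff_of_subset ?_ |>.mpr ⟨i, ?_, ?_⟩)
  · intro j
    simp only [Finset.mem_filter, Finset.mem_univ, true_and]
    rcases eq_or_ne j i with rfl | hj
    · simp [Bool.eq_not_of_ne (Ne.symm h)]
    · rw [flipc_apply_of_ne x hj]
      exact id
  · simpa using h
  · simp [Bool.eq_not_of_ne (Ne.symm h)]

end Flip

/-- With this, `HasEdge f j i s` says `s = bdiff (f x i) (f (flipc x j) i) * bdiff (x j) (!x j)`
for some `x`. -/
def bdiff (a b : Bool) : ℤ := bint b - bint a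

lemma bdiff_mul_self {a b : Bool} (h : a ≠ b) : bdiff a b * bdiff a b = 1 := by
  cases a <;> cases b <;> simp_all [bdiff, bint]

theorem exists_hasEdge_of_apply_ne {V : Type*} [Fintype V] [DecidableEq V]
    (f : (V → Bool) → V → Bool) (i : V) {x z : V → Bool} (h : f x i ≠ f z i) :
    ∃ j, x j ≠ z j ∧ HasEdge f j i (bdiff (f x i) (f z i) * bdiff (x j) (z j)) := by
  induction hd : hammingDist x z using Nat.strong_induction_on generalizing x with
  | _ d ih =>
    obtain ⟨j₀, hj₀⟩ := Function.ne_iff.mp fun hxz : x = z => h (hxz ▸ rfl)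
    have hz : z j₀ = !x j₀ := Bool.eq_not_of_ne (Ne.symm hj₀)
    by_cases hflip : f (flipc x j₀) i = f x i
    · obtain ⟨j, hj, hedge⟩ := ih _ (hd ▸ hammingDist_flipc_lt hj₀) (hflip ▸ h) rfl
      have hjj₀ : j ≠ j₀ := by
        rintro rfl
        simp [hz] at hj
      rw [flipc_apply_of_ne x hjj₀] at hj hedge
      exact ⟨j, hj, hflip ▸ hedge⟩
    · have hfz : f (flipc x j₀) i = f z i := by
        rw [Bool.eq_not_of_ne hflip, Bool.eq_not_of_ne (Ne.symm h)]
      exact ⟨j₀, hj₀, x, by rw [hfz, ← hz]; rfl⟩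

theorem Finite.exists_injective_cycle {α : Type*} [Finite α] [Nonempty α] (g : α → α) :
    ∃ (k : ℕ) (c : Fin (k + 1) → α), Function.Injective c ∧ ∀ m, g (c (m + 1)) = c m := by
  obtain ⟨x⟩ := ‹Nonempty α›
  obtain ⟨a, b, hab, hx⟩ := Set.finite_univ.exists_lt_map_eq_of_forall_mem
    (f := fun t => g^[t] x) fun _ => Set.mem_univ _
  have hp : g^[a] x ∈ Function.periodicPts g := by
    refine Function.mk_mem_periodicPts (Nat.sub_pos_of_lt hab) ?_
    rw [Function.IsPeriodicPt, Function.IsFixedPt, ← Function.iterate_add_apply,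
      Nat.sub_add_cancel hab.le]
    exact hx.symm
  set p := g^[a] x
  obtain ⟨k, hk⟩ := Nat.exists_eq_succ_of_ne_zero
    (Function.minimalPeriod_pos_of_mem_periodicPts hp).ne'
  refine ⟨k, fun m => g^[k - m] p, fun m m' hmm' => ?_, fun m => ?_⟩
  · have := (Function.iterate_eq_iterate_iff_of_lt_minimalPeriod (by omega) (by omega)).mp hmm'
    omega
  · show g (g^[k - (m + 1 : Fin (k + 1)).val] p) = g^[k - m.val] p
    rw [← Function.iterate_succ_apply' g, Fin.val_add_one]
    split_ifs with hm
    · rw [hm, Fin.val_last, Nat.sub_self, Nat.sub_zero, ← hk, Function.iterate_minimalPeriod]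
      rfl
    · have := Fin.val_lt_last hm
      congr 1
      omega

lemma Fin.prod_mul_add_one_eq_one {M : Type*} [CommMonoid M] {k : ℕ} (e : Fin (k + 1) → M)
    (he : ∀ m, e m * e m = 1) : ∏ m, e (m + 1) * e m = 1 := by
  have hshift : ∏ m, e (m + 1) = ∏ m, e m :=
    Fintype.prod_equiv (Equiv.addRight 1) _ _ fun _ => rfl
  rw [Finset.prod_mul_distrib, hshift, ← Finset.prod_mul_distrib]
  exact Finset.prod_eq_one fun m _ => he m

theorem PosFVS.eq_of_agree_of_fixed {n : ℕ} {f : (Fin n → Bool) → Fin n → Bool}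
    {I : Finset (Fin n)} (hI : PosFVS f I) {x z : Fin n → Bool} (hagree : ∀ i ∈ I, x i = z i)
    (hfixed : ∀ i, x i ≠ z i → f x i = x i ∧ f z i = z i) : x = z := by
  by_contra hne
  let D := {i // x i ≠ z i}
  have : Nonempty D := let ⟨i, hi⟩ := Function.ne_iff.mp hne; ⟨⟨i, hi⟩⟩
  have hin : ∀ i : D, ∃ j : D,
      HasEdge f j i (bdiff (x i) (z i) * bdiff (x j) (z j)) := fun i => by
    have hsep : f x i ≠ f z i := by rw [(hfixed i i.2).1, (hfixed i i.2).2]; exact i.2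
    obtain ⟨j, hj, hedge⟩ := exists_hasEdge_of_apply_ne f i hsep
    rw [(hfixed i i.2).1, (hfixed i i.2).2] at hedge
    exact ⟨⟨j, hj⟩, hedge⟩
  choose g hg using hin
  obtain ⟨k, c, hc, hcg⟩ := Finite.exists_injective_cycle g
  let e : Fin (k + 1) → ℤ := fun m => bdiff (x (c m)) (z (c m))
  have he : ∀ m, e m * e m = 1 := fun m => bdiff_mul_self (c m).2
  have hedge : ∀ m, HasEdge f (c m) (c (m + 1)) (e (m + 1) * e m) := fun m => by
    simpa only [hcg] using hg (c (m + 1))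
  have hsign : ∀ m, e (m + 1) * e m = 1 ∨ e (m + 1) * e m = -1 := fun m =>
    Int.eq_one_or_neg_one_of_mul_eq_one (v := e (m + 1) * e m)
      (by rw [mul_mul_mul_comm, he, he, one_mul])
  obtain ⟨m, hm⟩ := hI k (fun m => (c m).1) (fun m => e (m + 1) * e m)
    (Subtype.val_injective.comp hc) hedge hsign (Fin.prod_mul_add_one_eq_one e he)
  exact (c m).2 (hagree _ hm)

section Attractor

variable {V : Type*} [DecidableEq V] {f : (V → Bool) → V → Bool} {A B : Set (V → Bool)}

lemma IsTrap.flipc_mem (hA : IsTrap f A) {x : V → Bool} (hx : x ∈ A) {i : V}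
    (h : f x i ≠ x i) : flipc x i ∈ A :=
  hA x hx _ ⟨i, h, rfl⟩

lemma IsAttractor.eq_of_mem_of_mem (hA : IsAttractor f A) (hB : IsAttractor f B)
    {x : V → Bool} (hxA : x ∈ A) (hxB : x ∈ B) : A = B := by
  have htrap : IsTrap f (A ∩ B) := fun y hy w hw => ⟨hA.2.1 y hy.1 w hw, hB.2.1 y hy.2 w hw⟩
  exact (hA.2.2 _ Set.inter_subset_left ⟨x, hxA, hxB⟩ htrap).symm.trans
    (hB.2.2 _ Set.inter_subset_right ⟨x, hxA, hxB⟩ htrap)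

end Attractor

theorem IsAttractor.eq_of_agree_of_posFVS {n : ℕ} {f : (Fin n → Bool) → Fin n → Bool}
    {I : Finset (Fin n)} (hI : PosFVS f I) {A B : Set (Fin n → Bool)} (hA : IsAttractor f A)
    (hB : IsAttractor f B) {x z : Fin n → Bool} (hx : x ∈ A) (hz : z ∈ B)
    (hagree : ∀ i ∈ I, x i = z i) : A = B := by
  induction hd : hammingDist x z using Nat.strong_induction_on generalizing x z with
  | _ d ih =>
    by_cases hfixed : ∀ i, x i ≠ z i → f x i = x i ∧ f z i = z i
    · exact hA.eq_of_mem_of_mem hB hx (hI.eq_of_agree_of_fixed hagree hfixed ▸ hz)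
    push Not at hfixed
    obtain ⟨i, hi, hfree⟩ := hfixed
    have hiI : i ∉ I := fun hiI => hi (hagree i hiI)
    have hagree_flip : ∀ y : Fin n → Bool, ∀ j ∈ I, flipc y i j = y j := fun y j hj =>
      flipc_apply_of_ne y (ne_of_mem_of_not_mem hj hiI)
    by_cases hxi : f x i = x i
    · refine ih _ (hd ▸ ?_) hx (hB.2.1.flipc_mem hz (hfree hxi))
        (fun j hj => (hagree_flip z j hj).symm ▸ hagree j hj) rfl
      rw [hammingDist_comm, hammingDist_comm x z]
      exact hammingDist_flipc_lt (Ne.symm hi)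
    · exact ih _ (hd ▸ hammingDist_flipc_lt hi) (hA.2.1.flipc_mem hx hxi) hz
        (fun j hj => (hagree_flip x j hj).symm ▸ hagree j hj) rfl

theorem stmt19 (n : ℕ) (f : (Fin n → Bool) → Fin n → Bool)
    (I : Finset (Fin n)) (hI : PosFVS f I) :
    Nat.card {A : Set (Fin n → Bool) | IsAttractor f A} ≤ 2 ^ I.card := by
  let restrict : {A : Set (Fin n → Bool) | IsAttractor f A} → (I → Bool) :=
    fun A i => A.2.1.some i
  have hinj : Function.Injective restrict := fun A B h =>
    Subtype.ext <| A.2.eq_of_agree_of_posFVS hI B.2 A.2.1.some_mem B.2.1.some_mem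
      fun i hi => congrFun h ⟨i, hi⟩
  calc Nat.card {A : Set (Fin n → Bool) | IsAttractor f A}
      ≤ Nat.card (I → Bool) := Nat.card_le_card_of_injective _ hinj
    _ = 2 ^ I.card := by simp
end
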